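/- arXiv:2501.13640 — 4 statements merged into one kernel-verified Lean document; each statement's English description precedes it below -/
import Mathlib

section
/- Let n be a positive integer such that for every prime q with q ≡ 2 (mod 3) the exponent of q in the prime factorization of n is even. Then the set {(a,b) ∈ ℤ × ℤ : a² + a·b + b² = n} is finite and its cardinality equals 6 · ∏_p (e_p + 1), where the product ranges over all primes p dividing n with p ≡ 1 (mod 3), and e_p denotes the exponent of p in n. -/
/-!
The form is the norm of the Eisenstein integers `ℤ[ω]`, which are Euclidean for the norm, so
elements of prime norm are prime. The prime `3` is a unit times `(1 + ω)²`, and `1 + ω` divides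
every element whose norm is divisible by `3`; modulo a prime `q ≡ 2 (mod 3)` there is no primitive
cube root of unity, so `q` divides every element whose norm is divisible by `q`. Dividing out by
these elements does not change the number of elements of a given norm. Modulo a prime
`p ≡ 1 (mod 3)` there is a primitive cube root of unity, so `p` is not prime in `ℤ[ω]` and
`p = π * star π` with `π ∤ star π`. The elements of norm `p ^ e * m` with `p ∤ m` are then
exactly the products `π ^ a * star π ^ b * w` with `a + b = e` and `w` of norm `m`, each written
uniquely, which gives the factor `e + 1`. The six units account for `n = 1`.
-/

theorem emultiplicity_pow_mul_of_not_dvd {α : Type*} [CommMonoidWithZero α] [IsCancelMulZero α]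
    {p x : α} (hp : Prime p) (hx : ¬ p ∣ x) (a : ℕ) : emultiplicity p (p ^ a * x) = a := by
  rw [emultiplicity_mul hp, emultiplicity_pow_self_of_prime hp, emultiplicity_eq_zero.mpr hx,
    add_zero]

theorem Nat.prod_primeFactors_filter_pow_mul {p a k : ℕ} (hp : p.Prime) (hpa : ¬ p ∣ a) :
    ∏ q ∈ (p ^ k * a).primeFactors with q % 3 = 1, ((p ^ k * a).factorization q + 1) =
      (if p % 3 = 1 then k + 1 else 1) *
        ∏ q ∈ a.primeFactors with q % 3 = 1, (a.factorization q + 1) := by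
  have ha : a ≠ 0 := by rintro rfl; exact hpa (dvd_zero p)
  have hprod : ∀ n : ℕ, ∏ q ∈ n.primeFactors with q % 3 = 1, (n.factorization q + 1) =
      n.factorization.prod fun q e => if q % 3 = 1 then e + 1 else 1 := fun n => by
    rw [Nat.prod_factorization_eq_prod_primeFactors, Finset.prod_filter]
  have hdisj : Disjoint (p ^ k).factorization.support a.factorization.support := by
    rw [hp.factorization_pow, Finset.disjoint_left]
    intro q hq
    rw [Finsupp.mem_support_iff, not_not,
      Finset.mem_singleton.mp (Finsupp.support_single_subset hq)]
    exact Nat.factorization_eq_zero_of_not_dvd hpa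
  rw [hprod, hprod, Nat.factorization_mul (pow_ne_zero _ hp.ne_zero) ha,
    Finsupp.prod_add_index_of_disjoint hdisj, hp.factorization_pow,
    Finsupp.prod_single_index (by simp)]

namespace ZMod

open Polynomial

variable {p : ℕ} [Fact p.Prime]

theorem neZero_three (hp3 : p ≠ 3) : NeZero ((3 : ℕ) : ZMod p) :=
  NeZero.of_not_dvd _ fun h => hp3 ((Nat.prime_dvd_prime_iff_eq Fact.out Nat.prime_three).mp h)

theorem mod_three_eq_one_of_sq_add_self_add_one_eq_zero (hp3 : p ≠ 3) {s : ZMod p}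
    (hs : s ^ 2 + s + 1 = 0) : p % 3 = 1 := by
  have := neZero_three hp3
  have hroot : (cyclotomic 3 (ZMod p)).IsRoot s := by simpa [cyclotomic_three] using hs
  have hord : 3 = orderOf s := (isRoot_cyclotomic_iff.mp hroot).eq_orderOf
  have hs0 : s ≠ 0 := by rintro rfl; simp at hs
  have h3 : 3 ∣ p - 1 := hord ▸ orderOf_dvd_card_sub_one hs0
  have := (Fact.out : p.Prime).two_le
  omega

theorem exists_sq_add_self_add_one_eq_zero (hp : p % 3 = 1) :
    ∃ s : ZMod p, s ^ 2 + s + 1 = 0 := by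
  have : Fact (Nat.Prime 3) := ⟨Nat.prime_three⟩
  have := neZero_three (p := p) (by omega)
  have h3 : 3 ∣ Fintype.card (ZMod p)ˣ := by
    rw [card_units]
    omega
  obtain ⟨u, hu⟩ := exists_prime_orderOf_dvd_card 3 h3
  have hprim : IsPrimitiveRoot (u : ZMod p) 3 := by
    rw [← hu, ← orderOf_units]
    exact IsPrimitiveRoot.orderOf _
  exact ⟨u, by simpa [cyclotomic_three] using isRoot_cyclotomic_iff.mpr hprim⟩

end ZMod

namespace Int

theorem dvd_and_dvd_of_dvd_sq_add_mul_add_sq {p : ℕ} (hp : p.Prime) (hp2 : p % 3 = 2)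
    {a b : ℤ} (h : (p : ℤ) ∣ a ^ 2 + a * b + b ^ 2) : (p : ℤ) ∣ a ∧ (p : ℤ) ∣ b := by
  have := Fact.mk hp
  simp only [← ZMod.intCast_zmod_eq_zero_iff_dvd] at h ⊢
  push_cast at h
  by_cases hb : (b : ZMod p) = 0
  · rw [hb] at h ⊢
    simpa using h
  · have hs : (a / b : ZMod p) ^ 2 + a / b + 1 = 0 := by
      field_simp
      linear_combination h
    have := ZMod.mod_three_eq_one_of_sq_add_self_add_one_eq_zero (by omega) hs
    omega

theorem exists_dvd_sq_add_self_add_one {p : ℕ} (hp : p.Prime) (hp1 : p % 3 = 1) :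
    ∃ x : ℤ, (p : ℤ) ∣ x ^ 2 + x + 1 := by
  have := Fact.mk hp
  obtain ⟨s, hs⟩ := ZMod.exists_sq_add_self_add_one_eq_zero hp1
  exact ⟨s.val, by rw [← ZMod.intCast_zmod_eq_zero_iff_dvd]; simpa using hs⟩

/-- Division rounded to the nearest integer: `⌊(2u + n) / 2n⌋ = ⌊u / n + 1/2⌋`. -/
def roundDiv (u n : ℤ) : ℤ := (2 * u + n) / (2 * n)

theorem two_mul_abs_sub_mul_roundDiv_le (u : ℤ) {n : ℤ} (hn : 0 < n) :
    2 * |u - n * roundDiv u n| ≤ n := by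
  suffices |2 * (u - n * roundDiv u n)| ≤ n by rwa [abs_mul, abs_two] at this
  have h := emod_add_mul_ediv (2 * u + n) (2 * n)
  have h0 := emod_nonneg (2 * u + n) (by omega : 2 * n ≠ 0)
  have h1 := emod_lt_of_pos (2 * u + n) (by omega : 0 < 2 * n)
  rw [abs_le, roundDiv]
  constructor <;> linarith

end Int

theorem sq_add_mul_add_sq_lt {α : Type*} [CommRing α] [LinearOrder α] [IsStrictOrderedRing α]
    {r s n : α} (hr : 2 * |r| ≤ n) (hs : 2 * |s| ≤ n) (hn : 0 < n) :
    r ^ 2 + r * s + s ^ 2 < n ^ 2 := by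
  have hrs : r * s ≤ |r| * |s| := by rw [← abs_mul]; exact le_abs_self _
  nlinarith [sq_abs r, sq_abs s, abs_nonneg r, abs_nonneg s,
    mul_le_mul hr hr (by positivity) hn.le, mul_le_mul hr hs (by positivity) hn.le,
    mul_le_mul hs hs (by positivity) hn.le]

/-- `ℤ[ω]` with `ω ^ 2 = ω - 1`: `ω` is a primitive sixth root of unity, chosen so that the norm
of `x + y ω` is `x ^ 2 + x y + y ^ 2`. -/
abbrev EisensteinInt := QuadraticAlgebra ℤ (-1) 1

namespace EisensteinInt

open QuadraticAlgebra Finset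
open scoped QuadraticAlgebra

theorem norm_eq_sq_add_mul_add_sq (z : EisensteinInt) :
    z.norm = z.re ^ 2 + z.re * z.im + z.im ^ 2 := by
  rw [norm_def]; ring

theorem norm_nonneg (z : EisensteinInt) : 0 ≤ z.norm := by
  rw [norm_eq_sq_add_mul_add_sq]
  nlinarith [sq_nonneg (z.re + z.im), sq_nonneg z.re, sq_nonneg z.im]

theorem norm_eq_zero {z : EisensteinInt} : z.norm = 0 ↔ z = 0 := by
  refine ⟨fun h => ?_, fun h => h ▸ norm_zero⟩
  rw [norm_eq_sq_add_mul_add_sq] at h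
  ext <;> simp <;> nlinarith [sq_nonneg (z.re + z.im), sq_nonneg z.re, sq_nonneg z.im]

theorem norm_pos {z : EisensteinInt} (hz : z ≠ 0) : 0 < z.norm :=
  (norm_nonneg z).lt_of_ne (Ne.symm (mt norm_eq_zero.mp hz))

theorem isUnit_iff_norm_eq_one {z : EisensteinInt} : IsUnit z ↔ z.norm = 1 := by
  rw [isUnit_iff_norm_isUnit, Int.isUnit_iff]
  have := norm_nonneg z
  omega

def nearestQuot (x y : EisensteinInt) : EisensteinInt :=
  ⟨Int.roundDiv (x * star y).re y.norm, Int.roundDiv (x * star y).im y.norm⟩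

theorem norm_sub_mul_nearestQuot_lt (x : EisensteinInt) {y : EisensteinInt} (hy : y ≠ 0) :
    (x - y * nearestQuot x y).norm < y.norm := by
  set N := y.norm
  have hN : 0 < N := norm_pos hy
  set w := x * star y
  have hmul : (x - y * nearestQuot x y) * star y = w - algebraMap ℤ _ N * nearestQuot x y := by
    rw [algebraMap_norm_eq_mul_star]; ring
  have hrem : (x - y * nearestQuot x y).norm * N =
      (w.re - N * Int.roundDiv w.re N) ^ 2
        + (w.re - N * Int.roundDiv w.re N) * (w.im - N * Int.roundDiv w.im N)
        + (w.im - N * Int.roundDiv w.im N) ^ 2 := by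
    rw [show N = (star y).norm from (norm_star y).symm, ← map_mul, hmul,
      norm_eq_sq_add_mul_add_sq]
    simp [nearestQuot, N, w]
  have hlt := sq_add_mul_add_sq_lt (Int.two_mul_abs_sub_mul_roundDiv_le w.re hN)
    (Int.two_mul_abs_sub_mul_roundDiv_le w.im hN) hN
  nlinarith

theorem norm_le_norm_mul_left (x : EisensteinInt) {y : EisensteinInt} (hy : y ≠ 0) :
    x.norm ≤ (x * y).norm := by
  rw [map_mul]
  exact le_mul_of_one_le_right (norm_nonneg x) (norm_pos hy)

noncomputable instance : EuclideanDomain EisensteinInt where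
  quotient := nearestQuot
  quotient_zero x := by ext <;> simp [nearestQuot, Int.roundDiv]
  remainder x y := x - y * nearestQuot x y
  quotient_mul_add_remainder_eq x y := by ring
  r := InvImage (· < ·) fun z => z.norm.toNat
  r_wellFounded := (measure fun z : EisensteinInt => z.norm.toNat).wf
  remainder_lt x y hy := by
    have := norm_sub_mul_nearestQuot_lt x hy
    have := norm_nonneg (x - y * nearestQuot x y)
    simp only [InvImage]
    omega
  mul_left_not_lt x y hy := by
    have := norm_le_norm_mul_left x hy
    simp only [InvImage]
    omega

instance : IsLocalHom (norm : EisensteinInt →* ℤ) := ⟨fun _ => isUnit_iff_norm_isUnit.mpr⟩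

theorem prime_of_norm_eq_prime {π : EisensteinInt} {p : ℕ} (hp : p.Prime) (hπ : π.norm = p) :
    Prime π := by
  have : Irreducible (norm π) := hπ ▸ (Nat.prime_iff_prime_int.mp hp).irreducible
  exact this.of_map.prime

theorem natCast_dvd_iff {p : ℕ} {z : EisensteinInt} :
    (p : EisensteinInt) ∣ z ↔ (p : ℤ) ∣ z.re ∧ (p : ℤ) ∣ z.im := by
  rw [← algebraMap_dvd_iff, map_natCast]

theorem star_dvd_of_dvd_star {c z : EisensteinInt} (h : c ∣ star z) : star c ∣ z := by
  simpa [starRingEnd_apply] using map_dvd (starRingEnd _) h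

theorem algebraMap_dvd_mul_star {k : ℤ} {z : EisensteinInt} (h : k ∣ z.norm) :
    algebraMap ℤ EisensteinInt k ∣ z * star z :=
  algebraMap_norm_eq_mul_star z ▸ map_dvd _ h

theorem dvd_mul_star_of_dvd_norm {c z : EisensteinInt} (h : c.norm ∣ z.norm) :
    c ∣ z * star z :=
  (dvd_mul_right c (star c)).trans (algebraMap_norm_eq_mul_star c ▸ algebraMap_dvd_mul_star h)

theorem exists_norm_eq_of_dvd_norm {p : ℕ} (hp : p.Prime) {z : EisensteinInt}
    (hdvd : (p : ℤ) ∣ z.norm) (hz : ¬ (p : EisensteinInt) ∣ z) :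
    ∃ π : EisensteinInt, π.norm = p := by
  have hirr : ¬ Irreducible (p : EisensteinInt) := by
    intro hirr
    have hpz : (p : EisensteinInt) ∣ z * star z := by
      simpa using algebraMap_dvd_mul_star hdvd
    rcases hirr.prime.dvd_or_dvd hpz with h | h
    · exact hz h
    · exact hz (by simpa using star_dvd_of_dvd_star h)
  have hpu : ¬ IsUnit (p : EisensteinInt) := by
    rw [isUnit_iff_norm_eq_one, QuadraticAlgebra.norm_natCast]
    have := hp.one_lt
    nlinarith
  obtain ⟨a, b, hab, ha, hb⟩ : ∃ a b, (p : EisensteinInt) = a * b ∧ ¬ IsUnit a ∧ ¬ IsUnit b := by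
    simpa [irreducible_iff, hpu, not_or] using hirr
  rw [isUnit_iff_norm_eq_one] at ha hb
  have hnorm : a.norm.natAbs * b.norm.natAbs = p ^ 2 := by
    rw [← Int.natAbs_mul, ← map_mul, ← hab, QuadraticAlgebra.norm_natCast, Int.natAbs_pow,
      Int.natAbs_natCast]
  have := norm_nonneg a
  have := norm_nonneg b
  have := (hp.mul_eq_prime_sq_iff (by omega) (by omega)).mp hnorm
  exact ⟨a, by omega⟩

theorem exists_norm_eq_of_mod_three_eq_one {p : ℕ} (hp : p.Prime) (hp1 : p % 3 = 1) :
    ∃ π : EisensteinInt, π.norm = p := by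
  obtain ⟨x, hx⟩ := Int.exists_dvd_sq_add_self_add_one hp hp1
  refine exists_norm_eq_of_dvd_norm hp (z := ⟨x, 1⟩)
    (by rw [norm_eq_sq_add_mul_add_sq]; simpa using hx) ?_
  rw [natCast_dvd_iff]
  rintro ⟨-, h⟩
  exact hp.one_lt.ne' (by exact_mod_cast Int.eq_one_of_dvd_one (by positivity) h)

theorem natCast_dvd_of_dvd_norm_of_mod_three_eq_two {p : ℕ} (hp : p.Prime) (hp2 : p % 3 = 2)
    {z : EisensteinInt} (h : (p : ℤ) ∣ z.norm) : (p : EisensteinInt) ∣ z := by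
  rw [natCast_dvd_iff]
  rw [norm_eq_sq_add_mul_add_sq] at h
  exact Int.dvd_and_dvd_of_dvd_sq_add_mul_add_sq hp hp2 h

theorem norm_one_add_omega : (1 + ω : EisensteinInt).norm = 3 := by
  rw [norm_eq_sq_add_mul_add_sq]; norm_num

theorem one_add_omega_dvd_of_three_dvd_norm {z : EisensteinInt} (h : 3 ∣ z.norm) :
    1 + ω ∣ z := by
  have h3 : (3 : ℤ) ∣ (z.re - z.im) ^ 2 := by
    have : (z.re - z.im) ^ 2 = z.norm - 3 * (z.re * z.im) := by
      rw [norm_eq_sq_add_mul_add_sq]; ring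
    rw [this]
    exact dvd_sub h (dvd_mul_right 3 _)
  obtain ⟨t, ht⟩ := Int.prime_three.dvd_of_dvd_pow h3
  refine ⟨⟨z.re - t, -t⟩, ?_⟩
  ext
  · simp
  · simp; linarith

theorem not_dvd_star {π : EisensteinInt} {p : ℕ} (hp : p.Prime) (hp3 : p ≠ 3)
    (hπ : π.norm = p) : ¬ π ∣ star π := by
  intro h
  have hpZ : Prime (p : ℤ) := Nat.prime_iff_prime_int.mp hp
  -- `π - star π` is `π.im` times an element of norm `3`.
  have hb : (p : ℤ) ∣ π.im := by
    have hdvd := map_dvd QuadraticAlgebra.norm (dvd_sub dvd_rfl h : π ∣ π - star π)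
    have hnorm : (π - star π).norm = 3 * π.im ^ 2 := by
      rw [norm_eq_sq_add_mul_add_sq]; simp; ring
    rw [hπ, hnorm] at hdvd
    refine (hpZ.dvd_or_dvd hdvd).elim (fun h3 => absurd ?_ hp3) hpZ.dvd_of_dvd_pow
    exact (Nat.prime_dvd_prime_iff_eq hp Nat.prime_three).mp (by exact_mod_cast h3)
  have ha : (p : ℤ) ∣ π.re := by
    refine hpZ.dvd_of_dvd_pow (n := 2) ?_
    have : π.re ^ 2 = π.norm - (π.re + π.im) * π.im := by rw [norm_eq_sq_add_mul_add_sq]; ring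
    rw [this, hπ]
    exact dvd_sub dvd_rfl (dvd_mul_of_dvd_right hb _)
  obtain ⟨a, ha⟩ := ha
  obtain ⟨b, hb⟩ := hb
  rw [norm_eq_sq_add_mul_add_sq, ha, hb] at hπ
  have : (p : ℤ) * (p * (a ^ 2 + a * b + b ^ 2)) = p * 1 := by linear_combination hπ
  have := Int.eq_one_of_mul_eq_one_right (by positivity) (mul_left_cancel₀ hpZ.ne_zero this)
  exact hp.one_lt.ne' (by exact_mod_cast this)

def normFiber (n : ℤ) : Set EisensteinInt := {z | z.norm = n}

theorem mem_normFiber {n : ℤ} {z : EisensteinInt} : z ∈ normFiber n ↔ z.norm = n := Iff.rfl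

theorem normFiber_one : normFiber 1 =
    ↑({⟨1, 0⟩, ⟨-1, 0⟩, ⟨0, 1⟩, ⟨0, -1⟩, ⟨1, -1⟩, ⟨-1, 1⟩} : Finset EisensteinInt) := by
  ext ⟨a, b⟩
  simp only [mem_normFiber, norm_eq_sq_add_mul_add_sq, coe_insert, coe_singleton,
    Set.mem_insert_iff, Set.mem_singleton_iff, QuadraticAlgebra.mk.injEq]
  constructor
  · intro h
    obtain ⟨hb, hb'⟩ : -1 ≤ b ∧ b ≤ 1 := by constructor <;> nlinarith [sq_nonneg (2 * a + b)]
    obtain ⟨ha, ha'⟩ : -1 ≤ a ∧ a ≤ 1 := by constructor <;> nlinarith [sq_nonneg (a + 2 * b)]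
    interval_cases a <;> interval_cases b <;> simp_all
  · rintro (⟨rfl, rfl⟩ | ⟨rfl, rfl⟩ | ⟨rfl, rfl⟩ | ⟨rfl, rfl⟩ | ⟨rfl, rfl⟩ | ⟨rfl, rfl⟩) <;>
      norm_num

theorem ncard_normFiber_one : (normFiber 1).ncard = 6 := by
  rw [normFiber_one, Set.ncard_coe_finset]
  decide

theorem exists_mem_normFiber_eq_mul {c z : EisensteinInt} {n : ℤ} (hc : c ≠ 0) (hcz : c ∣ z)
    (hz : z.norm = c.norm * n) : ∃ w ∈ normFiber n, z = c * w := by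
  obtain ⟨w, rfl⟩ := hcz
  rw [map_mul] at hz
  exact ⟨w, mul_left_cancel₀ (norm_pos hc).ne' hz, rfl⟩

theorem normFiber_norm_mul {c : EisensteinInt} (hc0 : c ≠ 0)
    (hc : ∀ z, c.norm ∣ z.norm → c ∣ z) (n : ℤ) :
    normFiber (c.norm * n) = (c * ·) '' normFiber n := by
  ext z
  constructor
  · intro hz
    obtain ⟨w, hw, rfl⟩ := exists_mem_normFiber_eq_mul hc0 (hc z ⟨n, hz⟩) hz
    exact ⟨w, hw, rfl⟩
  · rintro ⟨w, hw, rfl⟩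
    simp_all [normFiber]

theorem ncard_normFiber_pow_mul {c : EisensteinInt} (hc0 : c ≠ 0)
    (hc : ∀ z, c.norm ∣ z.norm → c ∣ z) (k : ℕ) (n : ℤ) :
    (normFiber (c.norm ^ k * n)).ncard = (normFiber n).ncard := by
  induction k with
  | zero => simp
  | succ k ih =>
    rw [pow_succ', mul_assoc, normFiber_norm_mul hc0 hc,
      Set.ncard_image_of_injective _ (mul_right_injective₀ hc0), ih]

theorem normFiber_pow_mul_eq_image {π : EisensteinInt} (hπ : Prime π) (e : ℕ) (m : ℤ) :
    normFiber (π.norm ^ e * m) =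
      (fun x : (ℕ × ℕ) × EisensteinInt => π ^ x.1.1 * star π ^ x.1.2 * x.2) ''
        ((antidiagonal e : Set (ℕ × ℕ)) ×ˢ normFiber m) := by
  ext z
  constructor
  · induction e generalizing z with
    | zero =>
      intro hz
      exact ⟨((0, 0), z), ⟨by simp, by simpa [normFiber] using hz⟩, by simp⟩
    | succ e ih =>
      intro hz
      rw [mem_normFiber] at hz
      have hπ0 := hπ.ne_zero
      rcases hπ.dvd_or_dvd (dvd_mul_star_of_dvd_norm ⟨π.norm ^ e * m, by rw [hz]; ring⟩)
        with h | h
      · obtain ⟨w, hw, rfl⟩ :=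
          exists_mem_normFiber_eq_mul (n := π.norm ^ e * m) hπ0 h (by rw [hz]; ring)
        obtain ⟨⟨⟨a, b⟩, u⟩, ⟨hab, hu⟩, rfl⟩ := ih w hw
        refine ⟨⟨⟨a + 1, b⟩, u⟩, ⟨?_, hu⟩, by simp only; ring⟩
        simp only [mem_coe, HasAntidiagonal.mem_antidiagonal] at hab ⊢
        omega
      · obtain ⟨w, hw, rfl⟩ := exists_mem_normFiber_eq_mul (n := π.norm ^ e * m)
          (star_ne_zero.mpr hπ0) (star_dvd_of_dvd_star h)
          (by rw [hz, QuadraticAlgebra.norm_star]; ring)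
        obtain ⟨⟨⟨a, b⟩, u⟩, ⟨hab, hu⟩, rfl⟩ := ih w hw
        refine ⟨⟨⟨a, b + 1⟩, u⟩, ⟨?_, hu⟩, by simp only; ring⟩
        simp only [mem_coe, HasAntidiagonal.mem_antidiagonal] at hab ⊢
        omega
  · rintro ⟨⟨⟨a, b⟩, w⟩, ⟨hab, hw⟩, rfl⟩
    simp_all [normFiber, map_mul, map_pow, QuadraticAlgebra.norm_star, ← pow_add]

theorem injOn_pow_mul_star_pow_mul {π : EisensteinInt} (hπ : Prime π) (hπ' : ¬ π ∣ star π)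
    {e : ℕ} {m : ℤ} (hm : ¬ π.norm ∣ m) :
    Set.InjOn (fun x : (ℕ × ℕ) × EisensteinInt => π ^ x.1.1 * star π ^ x.1.2 * x.2)
      ((antidiagonal e : Set (ℕ × ℕ)) ×ˢ normFiber m) := by
  have hndvd : ∀ b, ∀ w ∈ normFiber m, ¬ π ∣ star π ^ b * w := by
    intro b w hw h
    rcases hπ.dvd_or_dvd h with h | h
    · exact hπ' (hπ.dvd_of_dvd_pow h)
    · exact hm (hw ▸ map_dvd QuadraticAlgebra.norm h)
  rintro ⟨⟨a, b⟩, w⟩ ⟨hab, hw⟩ ⟨⟨a', b'⟩, w'⟩ ⟨hab', hw'⟩ heq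
  simp only [mul_assoc] at heq
  have ha : a = a' := by
    have := congrArg (emultiplicity π) heq
    rwa [emultiplicity_pow_mul_of_not_dvd hπ (hndvd b w hw),
      emultiplicity_pow_mul_of_not_dvd hπ (hndvd b' w' hw'), Nat.cast_inj] at this
  have hb : b = b' := by
    simp only [mem_coe, HasAntidiagonal.mem_antidiagonal] at hab hab'
    omega
  subst ha hb
  rw [mul_right_inj' (pow_ne_zero _ hπ.ne_zero),
    mul_right_inj' (pow_ne_zero _ (star_ne_zero.mpr hπ.ne_zero))] at heq
  rw [heq]

theorem ncard_normFiber_pow_mul_of_prime {π : EisensteinInt} (hπ : Prime π)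
    (hπ' : ¬ π ∣ star π) (e : ℕ) {m : ℤ} (hm : ¬ π.norm ∣ m) :
    (normFiber (π.norm ^ e * m)).ncard = (e + 1) * (normFiber m).ncard := by
  rw [normFiber_pow_mul_eq_image hπ, (injOn_pow_mul_star_pow_mul hπ hπ' hm).ncard_image,
    Set.ncard_prod, Set.ncard_coe_finset, Finset.Nat.card_antidiagonal]

theorem ncard_normFiber_prime_pow_mul {p a k : ℕ} (hp : p.Prime) (hpa : ¬ p ∣ a)
    (hk : p % 3 = 2 → Even k) :
    (normFiber ((p ^ k * a : ℕ) : ℤ)).ncard =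
      (if p % 3 = 1 then k + 1 else 1) * (normFiber a).ncard := by
  rcases (by omega : p % 3 = 0 ∨ p % 3 = 1 ∨ p % 3 = 2) with h0 | h1 | h2
  · obtain rfl : p = 3 := ((Nat.prime_dvd_prime_iff_eq Nat.prime_three hp).mp
      (Nat.dvd_of_mod_eq_zero h0)).symm
    have := ncard_normFiber_pow_mul (c := 1 + ω) (fun h => by simpa [h] using norm_one_add_omega)
      (fun z hz => one_add_omega_dvd_of_three_dvd_norm (norm_one_add_omega ▸ hz)) k a
    rw [norm_one_add_omega] at this
    simpa using this
  · obtain ⟨π, hπ⟩ := exists_norm_eq_of_mod_three_eq_one hp h1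
    have := ncard_normFiber_pow_mul_of_prime (prime_of_norm_eq_prime hp hπ)
      (not_dvd_star hp (by omega) hπ) k (m := a) (by rw [hπ]; exact_mod_cast hpa)
    rw [hπ] at this
    simpa [h1] using this
  · obtain ⟨j, rfl⟩ := hk h2
    have := ncard_normFiber_pow_mul (c := p) (by exact_mod_cast hp.ne_zero)
      (fun z hz => natCast_dvd_of_dvd_norm_of_mod_three_eq_two hp h2
        (dvd_trans ⟨p, by rw [QuadraticAlgebra.norm_natCast]; ring⟩ hz)) j a
    rw [QuadraticAlgebra.norm_natCast] at this
    rw [if_neg (by omega)]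
    simpa [← pow_mul, ← two_mul] using this

theorem ncard_normFiber_natCast {n : ℕ} (hn : n ≠ 0)
    (h : ∀ q : ℕ, q.Prime → q % 3 = 2 → Even (n.factorization q)) :
    (normFiber n).ncard = 6 * ∏ p ∈ n.primeFactors with p % 3 = 1, (n.factorization p + 1) := by
  induction n using Nat.recOnPrimePow with
  | zero => exact absurd rfl hn
  | one => simp [ncard_normFiber_one]
  | prime_pow_mul a p k hp hpa _ ih =>
    have ha : a ≠ 0 := by rintro rfl; exact hpa (dvd_zero p)
    have hfac (q : ℕ) :
        (p ^ k * a).factorization q = (if p = q then k else 0) + a.factorization q := by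
      rw [Nat.factorization_mul (pow_ne_zero _ hp.ne_zero) ha, hp.factorization_pow,
        Finsupp.add_apply, Finsupp.single_apply]
    have hk : p % 3 = 2 → Even k := fun h2 => by
      simpa [hfac, Nat.factorization_eq_zero_of_not_dvd hpa] using h p hp h2
    have ha' : ∀ q : ℕ, q.Prime → q % 3 = 2 → Even (a.factorization q) := by
      intro q hq hq2
      by_cases hqp : q = p
      · simp [hqp, Nat.factorization_eq_zero_of_not_dvd hpa]
      · simpa [hfac, Ne.symm hqp] using h q hq hq2
    rw [ncard_normFiber_prime_pow_mul hp hpa hk, ih ha ha',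
      Nat.prod_primeFactors_filter_pow_mul hp hpa]
    ring

end EisensteinInt

theorem stmt_1 (n : ℕ) (hn : 0 < n)
    (h : ∀ q : ℕ, q.Prime → q % 3 = 2 → Even (n.factorization q)) :
    {z : ℤ × ℤ | z.1 ^ 2 + z.1 * z.2 + z.2 ^ 2 = (n : ℤ)}.Finite ∧
      {z : ℤ × ℤ | z.1 ^ 2 + z.1 * z.2 + z.2 ^ 2 = (n : ℤ)}.ncard =
        6 * ∏ p ∈ n.primeFactors.filter (fun p => p % 3 = 1), (n.factorization p + 1) := by
  have hset : {z : ℤ × ℤ | z.1 ^ 2 + z.1 * z.2 + z.2 ^ 2 = (n : ℤ)} =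
      QuadraticAlgebra.equivProd (-1) 1 '' EisensteinInt.normFiber n := by
    rw [Equiv.image_eq_preimage_symm]
    ext ⟨a, b⟩
    simp [EisensteinInt.normFiber, EisensteinInt.norm_eq_sq_add_mul_add_sq]
  have hcard := EisensteinInt.ncard_normFiber_natCast hn.ne' h
  rw [hset, Set.ncard_image_of_injective _ (Equiv.injective _), hcard]
  refine ⟨(Set.finite_of_ncard_ne_zero ?_).image _, rfl⟩
  rw [hcard]
  positivity
end

section
/- Let n be a positive integer such that for every prime q with q ≡ 2 (mod 3) the exponent of q in the prime factorization of n is even. Then the set {(a,b) : a, b positive integers, a² + a·b + b² = n} is finite, and its cardinality equals ∏_p (e_p + 1) − 1 if n is a perfect square, and ∏_p (e_p + 1) otherwise, where the product ranges over all primes p dividing n with p ≡ 1 (mod 3) and e_p denotes the exponent of p in n. -/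
/-!
Positive solutions `(a, b)` correspond to the elements `a - b ω² = (a + b) + b ω` of `ℤ[ω]` of
norm `n` in the open sextant `0 < im < re`. Adding the real point `m`, present exactly when
`n = m ^ 2`, gives one representative of each associate class of elements of norm `n`. As `ℤ[ω]` is
Euclidean, the number of these classes is multiplicative in `n`. For a prime power it is `e + 1`
when `p ≡ 1 (mod 3)` splits as `π * conj π` (the classes of `π ^ i * conj π ^ (e - i)`), and `1`
for the ramified prime `3` and for even powers of inert primes `q ≡ 2 (mod 3)`.
-/

theorem two_mul_abs_sub_round_div_mul_le (a m : ℤ) (hm : 0 < m) :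
    2 * |a - round ((a : ℚ) / m) * m| ≤ m := by
  have hm' : (0 : ℚ) < m := by exact_mod_cast hm
  have key : |(a : ℚ) - round ((a : ℚ) / m) * m| ≤ m / 2 := by
    rw [show (a : ℚ) - round ((a : ℚ) / m) * m = ((a : ℚ) / m - round ((a : ℚ) / m)) * m by
      field_simp, abs_mul, abs_of_pos hm']
    nlinarith [abs_sub_round ((a : ℚ) / m)]
  have : (2 : ℚ) * |((a - round ((a : ℚ) / m) * m : ℤ) : ℚ)| ≤ (m : ℚ) := by
    push_cast; linarith
  exact_mod_cast this

theorem Nat.eq_of_dvd_sq_of_mul_eq {a b m k : ℕ} (hm : 0 < m) (hk : 0 < k)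
    (hmk : m.Coprime k) (ha : a ∣ m ^ 2) (hb : b ∣ k ^ 2) (h : a * b = m * k) : a = m := by
  have ham : a ∣ m :=
    (Nat.Coprime.coprime_dvd_left ha (hmk.pow_left 2)).dvd_of_dvd_mul_right (h ▸ dvd_mul_right a b)
  have hbk : b ∣ k :=
    (Nat.Coprime.coprime_dvd_left hb (hmk.symm.pow_left 2)).dvd_of_dvd_mul_left
      (h ▸ dvd_mul_left b a)
  have := Nat.le_of_dvd hm ham
  have := Nat.le_of_dvd hk hbk
  nlinarith

theorem Prime.le_of_pow_mul_pow_dvd {M : Type*} [CommMonoidWithZero M] [IsCancelMulZero M]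
    {π σ : M} (hπ : Prime π) (hσ : ¬π ∣ σ) {i j k l : ℕ} (h : π ^ i * σ ^ k ∣ π ^ j * σ ^ l) :
    i ≤ j :=
  (pow_dvd_pow_iff hπ.ne_zero hπ.not_isUnit).1 <|
    hπ.pow_dvd_of_dvd_mul_right i (fun hl => hσ (hπ.dvd_of_dvd_pow hl))
      ((dvd_mul_right _ _).trans h)

/-- `⟨a, b⟩` stands for `a + b ω`, where `ω ^ 2 = -1 - ω`. -/
@[ext]
structure EisensteinInt_s2 where
  re : ℤ
  im : ℤ
  deriving DecidableEq

namespace EisensteinInt_s2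

instance : Zero EisensteinInt_s2 := ⟨⟨0, 0⟩⟩
instance : One EisensteinInt_s2 := ⟨⟨1, 0⟩⟩
instance : Add EisensteinInt_s2 := ⟨fun z w => ⟨z.re + w.re, z.im + w.im⟩⟩
instance : Neg EisensteinInt_s2 := ⟨fun z => ⟨-z.re, -z.im⟩⟩
instance : Sub EisensteinInt_s2 := ⟨fun z w => ⟨z.re - w.re, z.im - w.im⟩⟩
instance : Mul EisensteinInt_s2 :=
  ⟨fun z w => ⟨z.re * w.re - z.im * w.im, z.re * w.im + z.im * w.re - z.im * w.im⟩⟩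
instance : NatCast EisensteinInt_s2 := ⟨fun n => ⟨n, 0⟩⟩
instance : IntCast EisensteinInt_s2 := ⟨fun n => ⟨n, 0⟩⟩

@[simp] theorem zero_re : (0 : EisensteinInt_s2).re = 0 := rfl
@[simp] theorem zero_im : (0 : EisensteinInt_s2).im = 0 := rfl
@[simp] theorem one_re : (1 : EisensteinInt_s2).re = 1 := rfl
@[simp] theorem one_im : (1 : EisensteinInt_s2).im = 0 := rfl
@[simp] theorem add_re (z w : EisensteinInt_s2) : (z + w).re = z.re + w.re := rfl
@[simp] theorem add_im (z w : EisensteinInt_s2) : (z + w).im = z.im + w.im := rfl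
@[simp] theorem neg_re (z : EisensteinInt_s2) : (-z).re = -z.re := rfl
@[simp] theorem neg_im (z : EisensteinInt_s2) : (-z).im = -z.im := rfl
@[simp] theorem sub_re (z w : EisensteinInt_s2) : (z - w).re = z.re - w.re := rfl
@[simp] theorem sub_im (z w : EisensteinInt_s2) : (z - w).im = z.im - w.im := rfl
@[simp] theorem mul_re (z w : EisensteinInt_s2) : (z * w).re = z.re * w.re - z.im * w.im := rfl
@[simp] theorem mul_im (z w : EisensteinInt_s2) :
    (z * w).im = z.re * w.im + z.im * w.re - z.im * w.im := rfl
@[simp] theorem natCast_re (n : ℕ) : (n : EisensteinInt_s2).re = n := rfl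
@[simp] theorem natCast_im (n : ℕ) : (n : EisensteinInt_s2).im = 0 := rfl
@[simp] theorem intCast_re (n : ℤ) : (n : EisensteinInt_s2).re = n := rfl
@[simp] theorem intCast_im (n : ℤ) : (n : EisensteinInt_s2).im = 0 := rfl

instance : CommRing EisensteinInt_s2 where
  nsmul := nsmulRec
  zsmul := zsmulRec
  npow := npowRec
  add_assoc _ _ _ := by ext <;> simp only [add_re, add_im] <;> ring
  zero_add _ := by ext <;> simp
  add_zero _ := by ext <;> simp
  add_comm _ _ := by ext <;> simp only [add_re, add_im] <;> ring
  neg_add_cancel _ := by ext <;> simp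
  sub_eq_add_neg _ _ := by
    ext <;> simp only [sub_re, sub_im, add_re, add_im, neg_re, neg_im] <;> ring
  left_distrib _ _ _ := by ext <;> simp only [mul_re, mul_im, add_re, add_im] <;> ring
  right_distrib _ _ _ := by ext <;> simp only [mul_re, mul_im, add_re, add_im] <;> ring
  zero_mul _ := by ext <;> simp
  mul_zero _ := by ext <;> simp
  mul_assoc _ _ _ := by ext <;> simp only [mul_re, mul_im] <;> ring
  one_mul _ := by ext <;> simp
  mul_one _ := by ext <;> simp
  mul_comm _ _ := by ext <;> simp only [mul_re, mul_im] <;> ring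
  natCast_zero := by ext <;> simp
  natCast_succ _ := by ext <;> simp
  intCast_ofNat _ := by ext <;> simp
  intCast_negSucc _ := by ext <;> simp [Int.negSucc_eq]

/-- The Galois conjugate, sending `ω` to `ω ^ 2 = -1 - ω`. -/
def conj (z : EisensteinInt_s2) : EisensteinInt_s2 := ⟨z.re - z.im, -z.im⟩

@[simp] theorem conj_re (z : EisensteinInt_s2) : (conj z).re = z.re - z.im := rfl
@[simp] theorem conj_im (z : EisensteinInt_s2) : (conj z).im = -z.im := rfl

def natNorm (z : EisensteinInt_s2) : ℕ := (z.re ^ 2 - z.re * z.im + z.im ^ 2).natAbs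

theorem natCast_natNorm (z : EisensteinInt_s2) :
    (natNorm z : ℤ) = z.re ^ 2 - z.re * z.im + z.im ^ 2 :=
  Int.natAbs_of_nonneg (by nlinarith [sq_nonneg (2 * z.re - z.im), sq_nonneg z.im])

theorem natNorm_eq_iff {z : EisensteinInt_s2} {n : ℕ} :
    natNorm z = n ↔ z.re ^ 2 - z.re * z.im + z.im ^ 2 = n := by
  rw [← natCast_natNorm, Nat.cast_inj]

@[simp] theorem natNorm_mul (z w : EisensteinInt_s2) : natNorm (z * w) = natNorm z * natNorm w := by
  rw [natNorm_eq_iff, Nat.cast_mul, natCast_natNorm, natCast_natNorm, mul_re, mul_im]; ring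

@[simp] theorem natNorm_pow (z : EisensteinInt_s2) (k : ℕ) : natNorm (z ^ k) = natNorm z ^ k := by
  induction k with
  | zero => rfl
  | succ k ih => rw [pow_succ, pow_succ, natNorm_mul, ih]

@[simp] theorem natNorm_conj (z : EisensteinInt_s2) : natNorm (conj z) = natNorm z := by
  rw [natNorm_eq_iff, natCast_natNorm, conj_re, conj_im]; ring

@[simp] theorem natNorm_natCast (n : ℕ) : natNorm n = n ^ 2 := by
  rw [natNorm_eq_iff]; simp

@[simp] theorem natNorm_zero : natNorm 0 = 0 := rfl

@[simp] theorem natNorm_one : natNorm 1 = 1 := by simpa using natNorm_natCast 1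

theorem mul_conj (z : EisensteinInt_s2) : z * conj z = natNorm z := by
  ext <;> simp only [mul_re, mul_im, conj_re, conj_im, natCast_re, natCast_im, natCast_natNorm]
    <;> ring

@[simp] theorem natNorm_eq_zero {z : EisensteinInt_s2} : natNorm z = 0 ↔ z = 0 := by
  refine ⟨fun hz => ?_, fun hz => hz ▸ natNorm_zero⟩
  have h := natNorm_eq_iff.1 hz
  push_cast at h
  have him : z.im = 0 := by nlinarith [sq_nonneg (2 * z.re - z.im), sq_nonneg z.im]
  ext <;> simp_all

theorem natNorm_pos {z : EisensteinInt_s2} : 0 < natNorm z ↔ z ≠ 0 := by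
  rw [Nat.pos_iff_ne_zero, Ne, natNorm_eq_zero]

theorem dvd_natNorm (z : EisensteinInt_s2) : z ∣ (natNorm z : EisensteinInt_s2) :=
  ⟨conj z, (mul_conj z).symm⟩

theorem natNorm_dvd_natNorm {z w : EisensteinInt_s2} (h : z ∣ w) : natNorm z ∣ natNorm w := by
  obtain ⟨c, rfl⟩ := h
  exact ⟨natNorm c, natNorm_mul z c⟩

instance : Nontrivial EisensteinInt_s2 := ⟨⟨0, 1, by simp [EisensteinInt_s2.ext_iff]⟩⟩

instance : NoZeroDivisors EisensteinInt_s2 where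
  eq_zero_or_eq_zero_of_mul_eq_zero {z w} h := by
    simpa [← natNorm_eq_zero] using congrArg natNorm h

instance : IsDomain EisensteinInt_s2 := NoZeroDivisors.to_isDomain _

/-- Division rounding each coordinate of `x * conj y / natNorm y` to the nearest integer. -/
instance : Div EisensteinInt_s2 :=
  ⟨fun x y => ⟨round (((x * conj y).re : ℚ) / natNorm y),
    round (((x * conj y).im : ℚ) / natNorm y)⟩⟩

theorem div_re (x y : EisensteinInt_s2) :
    (x / y).re = round (((x * conj y).re : ℚ) / natNorm y) := rfl

theorem div_im (x y : EisensteinInt_s2) :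
    (x / y).im = round (((x * conj y).im : ℚ) / natNorm y) := rfl

instance : Mod EisensteinInt_s2 := ⟨fun x y => x - y * (x / y)⟩

theorem natNorm_mod_lt (x : EisensteinInt_s2) {y : EisensteinInt_s2} (hy : y ≠ 0) :
    natNorm (x % y) < natNorm y := by
  set m : ℤ := ((natNorm y : ℕ) : ℤ)
  have hm : 0 < m := by simpa [m] using natNorm_pos.2 hy
  set a := (x * conj y).re - (x / y).re * m
  set b := (x * conj y).im - (x / y).im * m
  have ha : 2 * |a| ≤ m := two_mul_abs_sub_round_div_mul_le _ m hm
  have hb : 2 * |b| ≤ m := two_mul_abs_sub_round_div_mul_le _ m hm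
  have hrem : x % y * conj y = ⟨a, b⟩ := by
    have : x % y * conj y = x * conj y - x / y * (y * conj y) := by
      change (x - y * (x / y)) * conj y = _; ring
    rw [this, mul_conj]; ext <;> simp [a, b, m]
  have hnorm : (natNorm (x % y) : ℤ) * m = a ^ 2 - a * b + b ^ 2 := by
    simpa [m, natCast_natNorm] using congrArg (fun z => (natNorm z : ℤ)) hrem
  have : (natNorm (x % y) : ℤ) * m < m * m := by
    rw [hnorm]
    nlinarith [sq_abs a, sq_abs b, abs_nonneg a, abs_nonneg b, neg_abs_le (a * b), abs_mul a b,
      mul_le_mul ha hb (by positivity) (by positivity)]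
  exact Nat.cast_lt.1 (lt_of_mul_lt_mul_right this hm.le)

instance inst_s2 : EuclideanDomain EisensteinInt_s2 where
  quotient := (· / ·)
  remainder := (· % ·)
  quotient_zero x := by ext <;> simp [div_re, div_im]
  quotient_mul_add_remainder_eq x y := by change y * (x / y) + (x - y * (x / y)) = x; ring
  r := InvImage (· < ·) natNorm
  r_wellFounded := (measure natNorm).wf
  remainder_lt x y hy := natNorm_mod_lt x hy
  mul_left_not_lt a b hb := by
    simp only [InvImage, natNorm_mul, not_lt]
    exact Nat.le_mul_of_pos_right _ (natNorm_pos.2 hb)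

theorem isUnit_iff_natNorm_eq_one {z : EisensteinInt_s2} : IsUnit z ↔ natNorm z = 1 := by
  refine ⟨fun ⟨u, hu⟩ => ?_, fun h => IsUnit.of_mul_eq_one (conj z) (by rw [mul_conj, h]; rfl)⟩
  subst hu
  exact Nat.eq_one_of_mul_eq_one_right (by rw [← natNorm_mul, u.mul_inv, natNorm_one])

theorem eq_of_natNorm_eq_one {u : EisensteinInt_s2} (hu : natNorm u = 1) :
    u = ⟨1, 0⟩ ∨ u = ⟨-1, 0⟩ ∨ u = ⟨0, 1⟩ ∨ u = ⟨0, -1⟩ ∨ u = ⟨1, 1⟩ ∨ u = ⟨-1, -1⟩ := by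
  obtain ⟨a, b⟩ := u
  have h : a ^ 2 - a * b + b ^ 2 = 1 := by simpa using natNorm_eq_iff.1 hu
  obtain ⟨ha₁, ha₂⟩ : -1 ≤ a ∧ a ≤ 1 := by constructor <;> nlinarith [sq_nonneg (a - 2 * b)]
  obtain ⟨hb₁, hb₂⟩ : -1 ≤ b ∧ b ≤ 1 := by constructor <;> nlinarith [sq_nonneg (2 * a - b)]
  interval_cases a <;> interval_cases b <;> simp_all

/-- The sextant `0 ≤ im < re` is a fundamental domain for the action of the six units on the
nonzero elements. -/
def InSextant (z : EisensteinInt_s2) : Prop := 0 ≤ z.im ∧ z.im < z.re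

theorem InSextant.ne_zero {z : EisensteinInt_s2} (h : InSextant z) : z ≠ 0 := by
  rintro rfl
  simp [InSextant] at h

theorem exists_associated_inSextant {z : EisensteinInt_s2} (hz : z ≠ 0) :
    ∃ w, InSextant w ∧ Associated z w := by
  have key : ∀ u, natNorm u = 1 → InSextant (z * u) → ∃ w, InSextant w ∧ Associated z w :=
    fun u hu h => ⟨z * u, h, associated_mul_unit_right z u (isUnit_iff_natNorm_eq_one.2 hu)⟩
  have hz' : z.re ≠ 0 ∨ z.im ≠ 0 := by
    by_contra! h; exact hz (EisensteinInt_s2.ext h.1 h.2)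
  simp only [InSextant] at key
  rcases (by omega : (0 ≤ z.im ∧ z.im < z.re) ∨ (0 ≤ -z.im ∧ -z.im < -z.re) ∨
      (0 ≤ z.re - z.im ∧ z.re - z.im < -z.im) ∨ (0 ≤ z.im - z.re ∧ z.im - z.re < z.im) ∨
      (0 ≤ z.re ∧ z.re < z.re - z.im) ∨ (0 ≤ -z.re ∧ -z.re < z.im - z.re)) with
    h | h | h | h | h | h
  · exact key ⟨1, 0⟩ rfl (by simpa using h)
  · exact key ⟨-1, 0⟩ rfl (by simpa using h)
  · exact key ⟨0, 1⟩ rfl (by simpa using h)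
  · exact key ⟨0, -1⟩ rfl (by simpa using h)
  · exact key ⟨1, 1⟩ rfl (by simpa using h)
  · exact key ⟨-1, -1⟩ rfl (by simpa using h)

theorem InSextant.eq_of_associated {z w : EisensteinInt_s2} (hz : InSextant z) (hw : InSextant w)
    (h : Associated z w) : z = w := by
  obtain ⟨u, rfl⟩ := h
  obtain ⟨hz₁, hz₂⟩ := hz
  obtain ⟨hw₁, hw₂⟩ := hw
  rcases eq_of_natNorm_eq_one (isUnit_iff_natNorm_eq_one.1 u.isUnit) with h | h | h | h | h | h <;>
    simp only [h, mul_re, mul_im] at hw₁ hw₂ ⊢ <;> ext <;> simp <;> omega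

theorem natNorm_eq_of_associated {z w : EisensteinInt_s2} (h : Associated z w) :
    natNorm z = natNorm w := by
  obtain ⟨u, rfl⟩ := h
  rw [natNorm_mul, isUnit_iff_natNorm_eq_one.1 u.isUnit, mul_one]

/-- Junk value `0` at `z = 0`. -/
noncomputable def sextantRep (z : EisensteinInt_s2) : EisensteinInt_s2 :=
  if h : z = 0 then 0 else (exists_associated_inSextant h).choose

theorem inSextant_sextantRep {z : EisensteinInt_s2} (hz : z ≠ 0) : InSextant (sextantRep z) := by
  rw [sextantRep, dif_neg hz]; exact (exists_associated_inSextant hz).choose_spec.1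

theorem associated_sextantRep {z : EisensteinInt_s2} (hz : z ≠ 0) : Associated z (sextantRep z) := by
  rw [sextantRep, dif_neg hz]; exact (exists_associated_inSextant hz).choose_spec.2

theorem sextantRep_eq {z w : EisensteinInt_s2} (hw : InSextant w) (h : Associated z w) :
    sextantRep z = w := by
  have hz : z ≠ 0 := fun hz => hw.ne_zero ((associated_zero_iff_eq_zero w).1 (hz ▸ h.symm))
  exact (inSextant_sextantRep hz).eq_of_associated hw ((associated_sextantRep hz).symm.trans h)

def reprsOfNorm (n : ℕ) : Set EisensteinInt_s2 := {z | natNorm z = n ∧ InSextant z}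

/-- The number of ideals of norm `n`. -/
noncomputable def classCount (n : ℕ) : ℕ := (reprsOfNorm n).ncard

theorem classCount_eq_ncard {ι : Type*} {n : ℕ} (hn : n ≠ 0) (f : ι → EisensteinInt_s2) (s : Set ι)
    (hnorm : ∀ i ∈ s, natNorm (f i) = n)
    (hcover : ∀ z, natNorm z = n → ∃ i ∈ s, Associated z (f i))
    (hinj : ∀ i ∈ s, ∀ j ∈ s, Associated (f i) (f j) → i = j) :
    classCount n = s.ncard := by
  have hf : ∀ i ∈ s, f i ≠ 0 := fun i hi h0 => hn (by rw [← hnorm i hi, h0, natNorm_zero])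
  have himage : reprsOfNorm n = (sextantRep ∘ f) '' s := by
    ext z
    refine ⟨fun ⟨hzn, hz⟩ => ?_, ?_⟩
    · obtain ⟨i, hi, hzi⟩ := hcover z hzn
      exact ⟨i, hi, sextantRep_eq hz hzi.symm⟩
    · rintro ⟨i, hi, rfl⟩
      exact ⟨(natNorm_eq_of_associated (associated_sextantRep (hf i hi))).symm.trans (hnorm i hi),
        inSextant_sextantRep (hf i hi)⟩
  rw [classCount, himage, Set.InjOn.ncard_image]
  intro i hi j hj (hij : sextantRep (f i) = sextantRep (f j))
  refine hinj i hi j hj ((associated_sextantRep (hf i hi)).trans ?_)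
  rw [hij]
  exact (associated_sextantRep (hf j hj)).symm

theorem associated_of_dvd_of_natNorm_eq {z w : EisensteinInt_s2} (hw : w ≠ 0) (h : z ∣ w)
    (hN : natNorm z = natNorm w) : Associated z w := by
  obtain ⟨c, rfl⟩ := h
  refine associated_mul_unit_right z c (isUnit_iff_natNorm_eq_one.2 ?_)
  rw [natNorm_mul] at hN
  exact (Nat.mul_eq_left (natNorm_pos.2 (left_ne_zero_of_mul hw)).ne').1 hN.symm

theorem isRelPrime_of_coprime_natNorm {z w : EisensteinInt_s2} (h : (natNorm z).Coprime (natNorm w)) :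
    IsRelPrime z w := fun _ hdz hdw => isUnit_iff_natNorm_eq_one.2 <|
  Nat.eq_one_of_dvd_one (h ▸ Nat.dvd_gcd (natNorm_dvd_natNorm hdz) (natNorm_dvd_natNorm hdw))

theorem irreducible_of_natNorm_prime {z : EisensteinInt_s2} (h : (natNorm z).Prime) :
    Irreducible z where
  not_isUnit hz := h.ne_one (isUnit_iff_natNorm_eq_one.1 hz)
  isUnit_or_isUnit a b hab := by
    rw [hab, natNorm_mul, Nat.prime_mul_iff] at h
    simp only [isUnit_iff_natNorm_eq_one]
    tauto

theorem irreducible_natCast_iff {p : ℕ} (hp : p.Prime) :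
    Irreducible (p : EisensteinInt_s2) ↔ ∀ z, natNorm z ≠ p := by
  have hp2 : p ^ 2 ≠ p := by nlinarith [hp.two_le]
  refine ⟨fun hirr z hz => ?_, fun h => ⟨?_, fun a b hab => ?_⟩⟩
  · have := natNorm_eq_of_associated <|
      (irreducible_of_natNorm_prime (hz ▸ hp)).associated_of_dvd hirr (hz ▸ dvd_natNorm z)
    rw [hz, natNorm_natCast] at this
    exact hp2 this.symm
  · rw [isUnit_iff_natNorm_eq_one, natNorm_natCast]
    exact (Nat.one_lt_pow two_ne_zero hp.one_lt).ne'
  · have hN : natNorm a * natNorm b = p ^ 2 := by rw [← natNorm_mul, ← hab, natNorm_natCast]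
    obtain ⟨i, hi, hai⟩ := (Nat.dvd_prime_pow hp).1 (Dvd.intro _ hN)
    simp only [isUnit_iff_natNorm_eq_one]
    interval_cases i
    · exact Or.inl (by simpa using hai)
    · exact absurd (by simpa using hai) (h a)
    · exact Or.inr ((Nat.mul_eq_left (pow_ne_zero 2 hp.ne_zero)).1 (hai ▸ hN))

theorem natNorm_mod_three_ne_two (z : EisensteinInt_s2) : natNorm z % 3 ≠ 2 := by
  intro h
  have h3 : ((natNorm z : ℤ) : ZMod 3) = 2 := by
    rw [Int.cast_natCast, ← ZMod.natCast_mod, h]; rfl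
  rw [natCast_natNorm] at h3
  push_cast at h3
  generalize (z.re : ZMod 3) = a at h3
  generalize (z.im : ZMod 3) = b at h3
  revert a b
  decide

theorem exists_dvd_sq_add_self_add_one {p : ℕ} (hp : p.Prime) (h3 : p % 3 = 1) :
    ∃ x : ℤ, (p : ℤ) ∣ x ^ 2 + x + 1 := by
  have := Fact.mk hp
  obtain ⟨g, hg⟩ := exists_prime_orderOf_dvd_card (G := (ZMod p)ˣ) 3
    (by rw [ZMod.card_units p]; omega)
  have hg1 : (g : ZMod p) ≠ 1 := fun h => by
    rw [Units.val_eq_one.1 h, orderOf_one] at hg; omega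
  have hroot : (g : ZMod p) ^ 2 + g + 1 = 0 := by
    have hcube : ((g : ZMod p) - 1) * ((g : ZMod p) ^ 2 + g + 1) = 0 := by
      rw [show ((g : ZMod p) - 1) * ((g : ZMod p) ^ 2 + g + 1) = (g : ZMod p) ^ 3 - 1 by ring,
        ← Units.val_pow_eq_pow_val, ← hg, pow_orderOf_eq_one, Units.val_one, sub_self]
    exact (mul_eq_zero.1 hcube).resolve_left (sub_ne_zero.2 hg1)
  refine ⟨(g : ZMod p).val, ?_⟩
  rw [← ZMod.intCast_zmod_eq_zero_iff_dvd]
  push_cast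
  rwa [ZMod.natCast_val, ZMod.cast_id]

theorem exists_natNorm_eq_of_mod_three_eq_one {p : ℕ} (hp : p.Prime) (h3 : p % 3 = 1) :
    ∃ π : EisensteinInt_s2, natNorm π = p := by
  by_contra! h
  have hprime := ((irreducible_natCast_iff hp).2 h).prime
  obtain ⟨x, hx⟩ := exists_dvd_sq_add_self_add_one hp h3
  -- `p` divides `(x - ω) * (x + 1 + ω) = x ^ 2 + x + 1` but neither factor, by their `ω`-parts.
  have hdvd : (p : EisensteinInt_s2) ∣ ⟨x, -1⟩ * ⟨x + 1, 1⟩ := by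
    obtain ⟨c, hc⟩ := hx
    refine ⟨c, ?_⟩
    ext
    · simp only [mul_re, natCast_re, natCast_im, intCast_re, intCast_im]
      linear_combination hc
    · simp only [mul_im, natCast_re, natCast_im, intCast_re, intCast_im]
      ring
  rcases hprime.dvd_or_dvd hdvd with ⟨c, hc⟩ | ⟨c, hc⟩ <;>
    · have him := congrArg (Int.natAbs ∘ im) hc
      simp [Int.natAbs_mul] at him
      exact hp.ne_one (Nat.eq_one_of_mul_eq_one_right him.symm)

/-- Each of the six equations `conj π = π * u` makes the norm of `π` a square or three times a
square. -/
theorem not_associated_conj {π : EisensteinInt_s2} (hp : (natNorm π).Prime) (h3 : natNorm π ≠ 3) :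
    ¬Associated π (conj π) := by
  rintro ⟨u, hu⟩
  have hN := natCast_natNorm π
  have hsq : ∀ c : ℤ, (natNorm π : ℤ) ≠ c ^ 2 := fun c hc =>
    (Nat.prime_iff_prime_int.1 hp).not_isSquare ⟨c, by rw [hc, sq]⟩
  have h3sq : ∀ c : ℤ, (natNorm π : ℤ) ≠ 3 * c ^ 2 := fun c hc =>
    h3 ((Nat.prime_dvd_prime_iff_eq Nat.prime_three hp).1
      (Int.natCast_dvd_natCast.1 ⟨c ^ 2, hc⟩)).symm
  rcases eq_of_natNorm_eq_one (isUnit_iff_natNorm_eq_one.1 u.isUnit) with h | h | h | h | h | h <;>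
    obtain ⟨hre, him⟩ := EisensteinInt_s2.ext_iff.1 hu <;>
    simp only [h, mul_re, mul_im, conj_re, conj_im] at hre him
  · exact hsq π.re (by linear_combination hN + (π.im - π.re) * (by omega : π.im = 0))
  · exact h3sq π.re (by linear_combination hN + (π.im + π.re) * (by omega : π.im = 2 * π.re))
  · exact hsq π.im (by linear_combination hN + (π.re - π.im) * (by omega : π.re = 0))
  · exact h3sq π.im (by linear_combination hN + (π.re + π.im) * (by omega : π.re = 2 * π.im))
  · exact h3sq π.im (by linear_combination hN + (π.re - 2 * π.im) * (by omega : π.re = -π.im))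
  · exact hsq π.re (by linear_combination hN - π.im * (by omega : π.re = π.im))

theorem associated_pow_of_dvd_pow {π z : EisensteinInt_s2} (hπ : Prime π) {k e : ℕ}
    (hz : z ∣ π ^ k) (hN : natNorm z = natNorm π ^ e) : Associated z (π ^ e) := by
  obtain ⟨i, -, hi⟩ := (dvd_prime_pow hπ k).1 hz
  have hπN : 2 ≤ natNorm π := by
    have := natNorm_pos.2 hπ.ne_zero
    have := mt isUnit_iff_natNorm_eq_one.2 hπ.not_isUnit
    omega
  have hie : i = e := Nat.pow_right_injective hπN <| by
    simpa [hN] using (natNorm_eq_of_associated hi).symm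
  rwa [hie] at hi

theorem classCount_one : classCount 1 = 1 := by
  rw [classCount_eq_ncard one_ne_zero (fun _ : Unit => 1) {()} (by simp)
    (fun z hz => ⟨(), rfl, associated_one_iff_isUnit.2 (isUnit_iff_natNorm_eq_one.2 hz)⟩)
    (by simp), Set.ncard_singleton]

theorem exists_eq_mul_of_natNorm_eq_mul {v : EisensteinInt_s2} {m k : ℕ} (hm : 0 < m) (hk : 0 < k)
    (hmk : m.Coprime k) (hv : natNorm v = m * k) :
    ∃ z w, v = z * w ∧ natNorm z = m ∧ natNorm w = k := by
  have hvmk : v ∣ (m : EisensteinInt_s2) * k := by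
    rw [← Nat.cast_mul, ← hv]; exact dvd_natNorm v
  obtain ⟨z, w, hzm, hwk, rfl⟩ := exists_dvd_and_dvd_of_dvd_mul hvmk
  have hzm := natNorm_dvd_natNorm hzm
  have hwk := natNorm_dvd_natNorm hwk
  rw [natNorm_natCast] at hzm hwk
  rw [natNorm_mul] at hv
  exact ⟨z, w, rfl, Nat.eq_of_dvd_sq_of_mul_eq hm hk hmk hzm hwk hv,
    Nat.eq_of_dvd_sq_of_mul_eq hk hm hmk.symm hwk hzm (by rw [mul_comm, hv, mul_comm])⟩

theorem classCount_mul {m k : ℕ} (hmk : m.Coprime k) :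
    classCount (m * k) = classCount m * classCount k := by
  rcases Nat.eq_zero_or_pos m with rfl | hm
  · simp [(Nat.coprime_zero_left k).1 hmk, classCount_one]
  rcases Nat.eq_zero_or_pos k with rfl | hk
  · simp [(Nat.coprime_zero_right m).1 hmk, classCount_one]
  refine (classCount_eq_ncard (by positivity) (fun zw => zw.1 * zw.2)
    (reprsOfNorm m ×ˢ reprsOfNorm k) ?_ ?_ ?_).trans Set.ncard_prod
  · rintro ⟨z, w⟩ ⟨⟨hz, -⟩, hw, -⟩
    simp [hz, hw]
  · intro v hv
    obtain ⟨z, w, rfl, hz, hw⟩ := exists_eq_mul_of_natNorm_eq_mul hm hk hmk hv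
    have hz0 : z ≠ 0 := natNorm_pos.1 (hz ▸ hm)
    have hw0 : w ≠ 0 := natNorm_pos.1 (hw ▸ hk)
    refine ⟨(sextantRep z, sextantRep w),
      ⟨⟨?_, inSextant_sextantRep hz0⟩, ?_, inSextant_sextantRep hw0⟩,
      (associated_sextantRep hz0).mul_mul (associated_sextantRep hw0)⟩
    · rw [← natNorm_eq_of_associated (associated_sextantRep hz0), hz]
    · rw [← natNorm_eq_of_associated (associated_sextantRep hw0), hw]
  · rintro ⟨z, w⟩ ⟨⟨hz, hzS⟩, hw, hwS⟩ ⟨z', w'⟩ ⟨⟨hz', hz'S⟩, hw', hw'S⟩ h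
    have hzw' : IsRelPrime z w' := isRelPrime_of_coprime_natNorm (hz ▸ hw' ▸ hmk)
    obtain rfl : z = z' := hzS.eq_of_associated hz'S <| associated_of_dvd_of_natNorm_eq
      hz'S.ne_zero (hzw'.dvd_of_dvd_mul_right ((dvd_mul_right z w).trans h.dvd)) (hz.trans hz'.symm)
    exact Prod.ext rfl (hwS.eq_of_associated hw'S (h.of_mul_left (Associated.refl z) hzS.ne_zero))

/-- Covers the ramified prime, `3 ∣ (1 - ω) ^ 2`, and the inert primes `q`, of norm `q ^ 2`. -/
theorem classCount_natNorm_pow_eq_one {π : EisensteinInt_s2} (hπ : Prime π) {k : ℕ}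
    (hdvd : (natNorm π : EisensteinInt_s2) ∣ π ^ k) (e : ℕ) : classCount (natNorm π ^ e) = 1 := by
  have hn : natNorm π ^ e ≠ 0 := pow_ne_zero e (natNorm_pos.2 hπ.ne_zero).ne'
  rw [classCount_eq_ncard hn (fun _ : Unit => π ^ e) {()} (by simp) (fun z hz => ⟨(), rfl, ?_⟩)
    (by simp), Set.ncard_singleton]
  refine associated_pow_of_dvd_pow hπ (k := k * e) ((dvd_natNorm z).trans ?_) hz
  rw [hz, Nat.cast_pow, pow_mul]
  exact pow_dvd_pow_of_dvd hdvd e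

theorem classCount_natNorm_pow_of_not_associated {π : EisensteinInt_s2} (hp : (natNorm π).Prime)
    (hconj : ¬Associated π (conj π)) (e : ℕ) : classCount (natNorm π ^ e) = e + 1 := by
  have hπ : Prime π := (irreducible_of_natNorm_prime hp).prime
  have hσ : Prime (conj π) := (irreducible_of_natNorm_prime (by rwa [natNorm_conj])).prime
  have hndvd : ¬π ∣ conj π := fun h =>
    hconj (associated_of_dvd_of_natNorm_eq hσ.ne_zero h (natNorm_conj π).symm)
  rw [classCount_eq_ncard (pow_ne_zero e hp.ne_zero) (fun i => π ^ i * conj π ^ (e - i))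
    (Finset.range (e + 1)) ?_ ?_ ?_, Set.ncard_coe_finset, Finset.card_range]
  · intro i hi
    simp only [Finset.coe_range, Set.mem_Iio] at hi
    simp only [natNorm_mul, natNorm_pow, natNorm_conj, ← pow_add,
      Nat.add_sub_cancel' (by omega : i ≤ e)]
  · intro z hz
    have hdvd : z ∣ π ^ e * conj π ^ e := by
      rw [← mul_pow, mul_conj, ← Nat.cast_pow, ← hz]; exact dvd_natNorm z
    obtain ⟨z₁, z₂, h₁, h₂, rfl⟩ := exists_dvd_and_dvd_of_dvd_mul hdvd
    obtain ⟨i, -, hi⟩ := (dvd_prime_pow hπ e).1 h₁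
    obtain ⟨j, -, hj⟩ := (dvd_prime_pow hσ e).1 h₂
    have hij : i + j = e := Nat.pow_right_injective hp.two_le <| by
      simpa [natNorm_mul, natNorm_eq_of_associated hi, natNorm_eq_of_associated hj, ← pow_add]
        using hz
    refine ⟨i, by simp; omega, ?_⟩
    rw [show e - i = j by omega]
    exact hi.mul_mul hj
  · intro i _ j _ h
    exact le_antisymm (hπ.le_of_pow_mul_pow_dvd hndvd h.dvd)
      (hπ.le_of_pow_mul_pow_dvd hndvd h.symm.dvd)

theorem classCount_prime_pow {p : ℕ} (hp : p.Prime) {e : ℕ} (he : p % 3 = 2 → Even e) :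
    classCount (p ^ e) = if p % 3 = 1 then e + 1 else 1 := by
  rcases (by omega : p % 3 = 0 ∨ p % 3 = 1 ∨ p % 3 = 2) with h3 | h3 | h3
  · obtain rfl : p = 3 := ((Nat.prime_dvd_prime_iff_eq Nat.prime_three hp).1 (by omega)).symm
    have hnorm : natNorm ⟨1, -1⟩ = 3 := rfl
    have hdvd : (natNorm ⟨1, -1⟩ : EisensteinInt_s2) ∣ ⟨1, -1⟩ ^ 2 := ⟨⟨0, -1⟩, by ext <;> rfl⟩
    simpa [hnorm] using classCount_natNorm_pow_eq_one
      (irreducible_of_natNorm_prime (hnorm ▸ Nat.prime_three)).prime hdvd e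
  · obtain ⟨π, rfl⟩ := exists_natNorm_eq_of_mod_three_eq_one hp h3
    rw [if_pos h3]
    exact classCount_natNorm_pow_of_not_associated hp (not_associated_conj hp (by omega)) e
  · obtain ⟨f, rfl⟩ := he h3
    have hq : Prime (p : EisensteinInt_s2) :=
      ((irreducible_natCast_iff hp).2 fun z hz => natNorm_mod_three_ne_two z (hz ▸ h3)).prime
    have := classCount_natNorm_pow_eq_one hq (k := 2) (by simp) f
    rw [natNorm_natCast, ← pow_mul, two_mul] at this
    rw [if_neg (by omega), this]

theorem classCount_eq_prod {n : ℕ} (hn : n ≠ 0)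
    (h : ∀ q : ℕ, q.Prime → q % 3 = 2 → Even (n.factorization q)) :
    classCount n = ∏ p ∈ n.primeFactors.filter (fun p => p % 3 = 1), (n.factorization p + 1) := by
  rw [Nat.multiplicative_factorization classCount (fun _ _ => classCount_mul) classCount_one hn,
    Finsupp.prod, Nat.support_factorization, Finset.prod_filter]
  refine Finset.prod_congr rfl fun p hp => ?_
  have hp := Nat.prime_of_mem_primeFactors hp
  exact classCount_prime_pow hp (h p hp)

theorem finite_reprsOfNorm (n : ℕ) : (reprsOfNorm n).Finite := by
  refine (((Set.finite_Icc 0 (n : ℤ)).prod (Set.finite_Icc 0 (n : ℤ))).image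
    fun ab => (⟨ab.1, ab.2⟩ : EisensteinInt_s2)).subset ?_
  rintro z ⟨hz, him, hre⟩
  have hN := natNorm_eq_iff.1 hz
  exact ⟨(z.re, z.im), ⟨⟨by omega, by nlinarith⟩, by omega, by nlinarith⟩, rfl⟩

def positiveSolutions (n : ℕ) : Set (ℕ × ℕ) :=
  {z | 0 < z.1 ∧ 0 < z.2 ∧ z.1 ^ 2 + z.1 * z.2 + z.2 ^ 2 = n}

def ofPair (ab : ℕ × ℕ) : EisensteinInt_s2 := ⟨ab.1 + ab.2, ab.2⟩

theorem ofPair_injective : Function.Injective ofPair := by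
  rintro ⟨a, b⟩ ⟨a', b'⟩ h
  simp only [ofPair, mk.injEq] at h
  ext <;> simp only <;> omega

theorem image_ofPair_positiveSolutions (n : ℕ) :
    ofPair '' positiveSolutions n = {z ∈ reprsOfNorm n | 0 < z.im} := by
  ext z
  constructor
  · rintro ⟨⟨a, b⟩, ⟨ha, hb, hab⟩, rfl⟩
    refine ⟨⟨natNorm_eq_iff.2 ?_, by simp [ofPair], by simp [ofPair]; omega⟩,
      by simp [ofPair]; omega⟩
    simp only [ofPair, ← hab]
    push_cast; ring
  · rintro ⟨⟨hz, -, hre⟩, him⟩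
    refine ⟨((z.re - z.im).toNat, z.im.toNat), ⟨by omega, by omega, ?_⟩,
      by ext <;> simp [ofPair] <;> omega⟩
    have hN := natNorm_eq_iff.1 hz
    zify
    rw [Int.toNat_of_nonneg (by omega), Int.toNat_of_nonneg (by omega)]
    linear_combination hN

theorem ncard_reprsOfNorm_im_eq_zero {n : ℕ} (hn : n ≠ 0) :
    {z ∈ reprsOfNorm n | z.im = 0}.ncard = if IsSquare n then 1 else 0 := by
  have hre : ∀ z ∈ {z ∈ reprsOfNorm n | z.im = 0}, z = z.re.toNat ∧ n = z.re.toNat ^ 2 := by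
    rintro z ⟨⟨hz, -, hre⟩, him⟩
    have hN := natNorm_eq_iff.1 hz
    rw [him] at hN hre
    refine ⟨by ext <;> simp [him]; omega, ?_⟩
    zify
    rw [Int.toNat_of_nonneg hre.le, ← hN]
    ring
  split_ifs with hsq
  · obtain ⟨m, rfl⟩ := hsq
    rw [Set.ncard_eq_one]
    refine ⟨m, Set.eq_singleton_iff_unique_mem.2 ⟨⟨⟨by simp [sq], ?_⟩, rfl⟩, fun z hz => ?_⟩⟩
    · exact ⟨le_rfl, by simpa using Nat.pos_of_ne_zero (by rintro rfl; simp at hn)⟩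
    · obtain ⟨hz, hnz⟩ := hre z hz
      rw [hz, Nat.pow_left_injective two_ne_zero (hnz.symm.trans (sq m).symm)]
  · rw [Set.eq_empty_of_forall_notMem fun z hz => hsq ⟨_, (hre z hz).2.trans (sq _)⟩,
      Set.ncard_empty]

theorem ncard_positiveSolutions_add {n : ℕ} (hn : n ≠ 0) :
    (positiveSolutions n).Finite ∧
      (positiveSolutions n).ncard + (if IsSquare n then 1 else 0) = classCount n := by
  have himage := image_ofPair_positiveSolutions n
  have hfin : (positiveSolutions n).Finite :=
    Set.Finite.of_finite_image (himage ▸ (finite_reprsOfNorm n).sep _) ofPair_injective.injOn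
  refine ⟨hfin, ?_⟩
  have hsplit : reprsOfNorm n =
      {z ∈ reprsOfNorm n | 0 < z.im} ∪ {z ∈ reprsOfNorm n | z.im = 0} := by
    ext z
    refine ⟨fun h => ?_, by rintro (⟨h, -⟩ | ⟨h, -⟩) <;> exact h⟩
    rcases h.2.1.lt_or_eq with him | him
    exacts [Or.inl ⟨h, him⟩, Or.inr ⟨h, him.symm⟩]
  rw [classCount, hsplit, Set.ncard_union_eq (Set.disjoint_left.2 fun z h₁ h₂ => h₁.2.ne' h₂.2)
    ((finite_reprsOfNorm n).sep _) ((finite_reprsOfNorm n).sep _), ← himage,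
    ofPair_injective.injOn.ncard_image, ncard_reprsOfNorm_im_eq_zero hn]

end EisensteinInt_s2

theorem stmt_2 (n : ℕ) (hn : 0 < n)
    (h : ∀ q : ℕ, q.Prime → q % 3 = 2 → Even (n.factorization q)) :
    {z : ℕ × ℕ | 0 < z.1 ∧ 0 < z.2 ∧ z.1 ^ 2 + z.1 * z.2 + z.2 ^ 2 = n}.Finite ∧
      (IsSquare n →
        {z : ℕ × ℕ | 0 < z.1 ∧ 0 < z.2 ∧ z.1 ^ 2 + z.1 * z.2 + z.2 ^ 2 = n}.ncard =
          (∏ p ∈ n.primeFactors.filter (fun p => p % 3 = 1), (n.factorization p + 1)) - 1) ∧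
      (¬ IsSquare n →
        {z : ℕ × ℕ | 0 < z.1 ∧ 0 < z.2 ∧ z.1 ^ 2 + z.1 * z.2 + z.2 ^ 2 = n}.ncard =
          ∏ p ∈ n.primeFactors.filter (fun p => p % 3 = 1), (n.factorization p + 1)) := by
  obtain ⟨hfin, hcount⟩ := EisensteinInt_s2.ncard_positiveSolutions_add hn.ne'
  rw [EisensteinInt_s2.classCount_eq_prod hn.ne' h] at hcount
  refine ⟨hfin, fun hsq => ?_, fun hsq => ?_⟩
  · rw [if_pos hsq] at hcount
    exact Nat.eq_sub_of_add_eq hcount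
  · rw [if_neg hsq, add_zero] at hcount
    exact hcount
end

section
/- For every positive integer d, the set of positive integers n for which the number of ordered pairs (a,b) of positive integers with a² + a·b + b² = n is exactly d, is infinite. -/
/-!
Identify `(x, y)` with `x - y ω` in the Eisenstein integers `ℤ[ω]`, so that `x² + xy + y²` is the
norm. When `n` is not a square no representation of `n` lies on the lines `x = 0`, `y = 0`,
`x + y = 0`, so the six units permute the representations freely and each orbit has exactly one
member with both coordinates positive: `r₊(n) = r(n) / 6`. As `7 = π π̄` splits, every
representation of `7n` is divisible by `π` or by `π̄`, and by both exactly when it is divisible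
by `7`; hence `r(7n) + r(n/7) = 2 r(n)`, and from `r(3) = 6` one gets `r(3 · 7ᵏ) = 6 (k + 1)`.
Finally `4 ∣ x² + xy + y²` forces `x, y` even, so `r₊(4m) = r₊(m)` and every
`n = 4ʲ · 3 · 7ᵈ⁻¹` has exactly `d` positive representations.
-/

lemma eq_succ_mul_of_add_eq_two_mul {t : ℕ → ℕ} (h₁ : t 1 = 2 * t 0)
    (h : ∀ k, t (k + 2) + t k = 2 * t (k + 1)) (k : ℕ) : t k = (k + 1) * t 0 := by
  suffices ∀ k, t k = (k + 1) * t 0 ∧ t (k + 1) = (k + 2) * t 0 from (this k).1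
  intro k
  induction k with
  | zero => exact ⟨by ring, h₁⟩
  | succ k ih =>
    refine ⟨ih.2, ?_⟩
    have := h k
    rw [ih.1, ih.2] at this
    linarith

namespace Loeschian

def form (z : ℤ × ℤ) : ℤ := z.1 ^ 2 + z.1 * z.2 + z.2 ^ 2

/-- The product in `ℤ[ω]` under `(x, y) ↦ x - y ω`; `rotate` below is multiplication by the
sixth root of unity `-ω`. -/
def eisMul (z w : ℤ × ℤ) : ℤ × ℤ :=
  (z.1 * w.1 - z.2 * w.2, z.1 * w.2 + z.2 * w.1 + z.2 * w.2)

lemma form_eisMul (z w : ℤ × ℤ) : form (eisMul z w) = form z * form w := by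
  simp only [form, eisMul]; ring

def reps (n : ℤ) : Set (ℤ × ℤ) := {z | form z = n}

def posReps (n : ℤ) : Set (ℤ × ℤ) := {z | 0 < z.1 ∧ 0 < z.2 ∧ form z = n}

def rotate (z : ℤ × ℤ) : ℤ × ℤ := (-z.2, z.1 + z.2)

lemma form_rotate (z : ℤ × ℤ) : form (rotate z) = form z := by
  simp only [form, rotate]; ring

lemma rotate_injective : Function.Injective rotate := by
  rintro ⟨a, b⟩ ⟨c, d⟩ h
  simp only [rotate, Prod.mk.injEq] at h ⊢
  omega

lemma eq_of_rotate_iterate_eq {i j : Fin 6} {s t : ℤ × ℤ} (hs₁ : 0 < s.1) (hs₂ : 0 < s.2)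
    (ht₁ : 0 < t.1) (ht₂ : 0 < t.2) (h : rotate^[i] s = rotate^[j] t) : i = j := by
  fin_cases i <;> fin_cases j <;>
    simp only [Fin.reduceFinMk, Fin.isValue, Fin.mk_one, Function.iterate_succ_apply',
      Function.iterate_zero_apply, rotate, Prod.ext_iff] at h ⊢ <;> omega

lemma exists_rotate_iterate_eq {z : ℤ × ℤ} (hx : z.1 ≠ 0) (hy : z.2 ≠ 0) (hxy : z.1 + z.2 ≠ 0) :
    ∃ i : Fin 6, ∃ s : ℤ × ℤ, 0 < s.1 ∧ 0 < s.2 ∧ rotate^[i] s = z := by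
  obtain ⟨x, y⟩ := z
  simp only at hx hy hxy
  rcases hx.lt_or_gt with hx | hx <;> rcases hy.lt_or_gt with hy | hy <;>
    rcases hxy.lt_or_gt with hxy | hxy
  exacts [⟨3, (-x, -y), by omega, by omega, by simp [rotate]⟩, by omega,
    ⟨2, (y, -x - y), by omega, by omega, by simp [rotate]⟩,
    ⟨1, (x + y, -x), by omega, by omega, by simp [rotate]⟩,
    ⟨4, (-x - y, x), by omega, by omega, by simp [rotate]⟩,
    ⟨5, (-y, x + y), by omega, by omega, by simp [rotate]⟩, by omega,
    ⟨0, (x, y), hx, hy, rfl⟩]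

lemma form_rotate_iterate (i : ℕ) (z : ℤ × ℤ) : form (rotate^[i] z) = form z :=
  congrFun (Function.iterate_invariant (f := rotate) (g := form) (funext form_rotate) i) z

lemma reps_finite (n : ℤ) : (reps n).Finite := by
  refine ((Set.finite_Icc (-(2 * n)) (2 * n)).prod (Set.finite_Icc (-(2 * n)) (2 * n))).subset ?_
  rintro ⟨x, y⟩ (hz : x ^ 2 + x * y + y ^ 2 = n)
  refine ⟨⟨?_, ?_⟩, ?_, ?_⟩ <;> nlinarith [sq_nonneg (x + y), sq_nonneg (x - 1), sq_nonneg (x + 1),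
    sq_nonneg (y - 1), sq_nonneg (y + 1)]

lemma ne_zero_of_not_isSquare_form {z : ℤ × ℤ} (h : ¬ IsSquare (form z)) :
    z.1 ≠ 0 ∧ z.2 ≠ 0 ∧ z.1 + z.2 ≠ 0 := by
  obtain ⟨x, y⟩ := z
  refine ⟨fun hx => h ⟨y, ?_⟩, fun hy => h ⟨x, ?_⟩, fun hxy => h ⟨x, ?_⟩⟩
  · simp only at hx; simp only [form, hx]; ring
  · simp only at hy; simp only [form, hy]; ring
  · simp only [form, show y = -x by simp only at hxy; omega]; ring

lemma reps_eq_image_rotate_iterate {n : ℤ} (hn : ¬ IsSquare n) :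
    reps n = (fun p : Fin 6 × (ℤ × ℤ) => rotate^[p.1] p.2) '' (Set.univ ×ˢ posReps n) := by
  ext z
  constructor
  · intro (hz : form z = n)
    obtain ⟨hx, hy, hxy⟩ := ne_zero_of_not_isSquare_form (hz ▸ hn)
    obtain ⟨i, s, hs₁, hs₂, rfl⟩ := exists_rotate_iterate_eq hx hy hxy
    exact ⟨(i, s), ⟨trivial, hs₁, hs₂, (form_rotate_iterate i s).symm.trans hz⟩, rfl⟩
  · rintro ⟨⟨i, s⟩, ⟨-, -, -, hs⟩, rfl⟩
    exact (form_rotate_iterate i s).trans hs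

lemma ncard_reps_eq_six_mul {n : ℤ} (hn : ¬ IsSquare n) :
    (reps n).ncard = 6 * (posReps n).ncard := by
  have hinj : Set.InjOn (fun p : Fin 6 × (ℤ × ℤ) => rotate^[p.1] p.2) (Set.univ ×ˢ posReps n) := by
    rintro ⟨i, s⟩ ⟨-, hs₁, hs₂, -⟩ ⟨j, t⟩ ⟨-, ht₁, ht₂, -⟩ h
    obtain rfl := eq_of_rotate_iterate_eq hs₁ hs₂ ht₁ ht₂ h
    exact Prod.ext rfl (rotate_injective.iterate i h)
  rw [reps_eq_image_rotate_iterate hn, hinj.ncard_image, Set.ncard_prod, Set.ncard_univ,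
    Nat.card_eq_fintype_card, Fintype.card_fin]

def π₇ : ℤ × ℤ := (2, 1)

def π₇' : ℤ × ℤ := (3, -1)

lemma form_π₇ : form π₇ = 7 := rfl

lemma form_π₇' : form π₇' = 7 := rfl

lemma eisMul_π₇_eisMul_π₇' (w : ℤ × ℤ) : eisMul π₇ (eisMul π₇' w) = (7 : ℤ) • w := by
  ext <;> simp only [eisMul, π₇, π₇', Prod.smul_fst, Prod.smul_snd, smul_eq_mul] <;> ring

lemma eisMul_π₇'_eisMul_π₇ (w : ℤ × ℤ) : eisMul π₇' (eisMul π₇ w) = (7 : ℤ) • w := by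
  ext <;> simp only [eisMul, π₇, π₇', Prod.smul_fst, Prod.smul_snd, smul_eq_mul] <;> ring

lemma seven_smul_injective : Function.Injective fun w : ℤ × ℤ => (7 : ℤ) • w :=
  smul_right_injective _ (by norm_num)

lemma eisMul_π₇_injective : Function.Injective (eisMul π₇) := fun a b h =>
  seven_smul_injective <| by simp only [← eisMul_π₇'_eisMul_π₇, h]

lemma eisMul_π₇'_injective : Function.Injective (eisMul π₇') := fun a b h =>
  seven_smul_injective <| by simp only [← eisMul_π₇_eisMul_π₇', h]

lemma exists_eisMul_π₇_eq_iff (z : ℤ × ℤ) : (∃ w, eisMul π₇ w = z) ↔ 7 ∣ z.1 - 2 * z.2 := by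
  constructor
  · rintro ⟨w, rfl⟩
    exact ⟨-w.2, by simp only [eisMul, π₇]; ring⟩
  · rintro ⟨k, hk⟩
    exact ⟨(z.2 + 3 * k, -k), by ext <;> simp only [eisMul, π₇] <;> linarith⟩

lemma exists_eisMul_π₇'_eq_iff (z : ℤ × ℤ) : (∃ w, eisMul π₇' w = z) ↔ 7 ∣ z.1 - 4 * z.2 := by
  constructor
  · rintro ⟨w, rfl⟩
    exact ⟨w.1 - w.2, by simp only [eisMul, π₇']; ring⟩
  · rintro ⟨k, hk⟩
    exact ⟨(z.2 + 2 * k, z.2 + k), by ext <;> simp only [eisMul, π₇'] <;> linarith⟩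

lemma exists_eisMul_eq_of_seven_dvd {z : ℤ × ℤ} (h : 7 ∣ form z) :
    (∃ w, eisMul π₇ w = z) ∨ ∃ w, eisMul π₇' w = z := by
  rw [exists_eisMul_π₇_eq_iff, exists_eisMul_π₇'_eq_iff, ← (show Prime (7 : ℤ) by norm_num).dvd_mul]
  have : (z.1 - 2 * z.2) * (z.1 - 4 * z.2) = form z - 7 * (z.1 * z.2 - z.2 ^ 2) := by
    simp only [form]; ring
  rw [this]
  exact dvd_sub h (dvd_mul_right 7 _)

lemma reps_seven_mul (n : ℤ) : reps (7 * n) = eisMul π₇ '' reps n ∪ eisMul π₇' '' reps n := by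
  ext z
  simp only [reps, Set.mem_union, Set.mem_image, Set.mem_ofPred_eq]
  constructor
  · intro hz
    rcases exists_eisMul_eq_of_seven_dvd ⟨n, hz⟩ with ⟨w, rfl⟩ | ⟨w, rfl⟩
    · rw [form_eisMul, form_π₇] at hz
      exact Or.inl ⟨w, by omega, rfl⟩
    · rw [form_eisMul, form_π₇'] at hz
      exact Or.inr ⟨w, by omega, rfl⟩
  · rintro (⟨w, hw, rfl⟩ | ⟨w, hw, rfl⟩)
    · rw [form_eisMul, form_π₇, hw]
    · rw [form_eisMul, form_π₇', hw]

lemma image_eisMul_π₇_inter_image_eisMul_π₇' (n : ℤ) :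
    eisMul π₇ '' reps n ∩ eisMul π₇' '' reps n =
      (fun u : ℤ × ℤ => (7 : ℤ) • u) '' {u | 7 * form u = n} := by
  ext z
  constructor
  · rintro ⟨⟨w, hw, rfl⟩, ⟨w', -, hw'⟩⟩
    have h₁ := (exists_eisMul_π₇_eq_iff _).1 ⟨w, rfl⟩
    have h₂ := (exists_eisMul_π₇'_eq_iff _).1 ⟨w', hw'⟩
    obtain ⟨a, ha⟩ : 7 ∣ (eisMul π₇ w).1 := by omega
    obtain ⟨b, hb⟩ : 7 ∣ (eisMul π₇ w).2 := by omega
    have hz : eisMul π₇ w = (7 : ℤ) • (a, b) := Prod.ext ha hb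
    refine ⟨(a, b), ?_, hz.symm⟩
    have h49 : form ((7 : ℤ) • (a, b)) = 7 * (7 * form (a, b)) := by
      simp only [form, Prod.smul_mk, smul_eq_mul]; ring
    have h7 := form_eisMul π₇ w
    rw [form_π₇, hw, hz, h49] at h7
    show 7 * form (a, b) = n
    linarith
  · rintro ⟨u, hu, rfl⟩
    refine ⟨⟨eisMul π₇' u, ?_, eisMul_π₇_eisMul_π₇' u⟩, ⟨eisMul π₇ u, ?_, eisMul_π₇'_eisMul_π₇ u⟩⟩
    · simp only [reps, Set.mem_ofPred_eq, form_eisMul, form_π₇']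
      exact hu
    · simp only [reps, Set.mem_ofPred_eq, form_eisMul, form_π₇]
      exact hu

lemma ncard_reps_seven_mul_add (n : ℤ) :
    (reps (7 * n)).ncard + {u | 7 * form u = n}.ncard = 2 * (reps n).ncard := by
  rw [reps_seven_mul, ← Set.ncard_image_of_injective {u | 7 * form u = n} seven_smul_injective,
    ← image_eisMul_π₇_inter_image_eisMul_π₇',
    Set.ncard_union_add_ncard_inter _ _ ((reps_finite n).image _) ((reps_finite n).image _),
    Set.ncard_image_of_injective _ eisMul_π₇_injective,
    Set.ncard_image_of_injective _ eisMul_π₇'_injective, two_mul]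

lemma posReps_three : posReps 3 = {(1, 1)} := by
  ext ⟨x, y⟩
  simp only [posReps, form, Set.mem_ofPred_eq, Set.mem_singleton_iff, Prod.mk.injEq]
  constructor
  · rintro ⟨hx, hy, h⟩
    constructor <;> nlinarith
  · rintro ⟨rfl, rfl⟩
    norm_num

lemma not_isSquare_three_mul_seven_pow (k : ℕ) : ¬ IsSquare (3 * 7 ^ k : ℤ) := by
  rintro ⟨r, hr⟩
  have h3 : Prime (3 : ℤ) := by norm_num
  obtain ⟨s, rfl⟩ : (3 : ℤ) ∣ r := h3.dvd_of_dvd_pow (n := 2) ⟨7 ^ k, by rw [sq, ← hr]⟩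
  have : (3 : ℤ) ∣ 7 ^ k := ⟨s * s, by linarith⟩
  have := h3.dvd_of_dvd_pow this
  norm_num at this

lemma setOf_seven_mul_form_eq_seven_mul (n : ℤ) : {u | 7 * form u = 7 * n} = reps n := by
  ext u
  exact mul_right_inj' (by norm_num : (7 : ℤ) ≠ 0)

lemma ncard_reps_seven_mul_seven_mul_add (n : ℤ) :
    (reps (7 * (7 * n))).ncard + (reps n).ncard = 2 * (reps (7 * n)).ncard := by
  rw [← ncard_reps_seven_mul_add, setOf_seven_mul_form_eq_seven_mul]

lemma ncard_reps_twenty_one : (reps (7 * 3)).ncard = 2 * (reps 3).ncard := by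
  have hempty : {u | 7 * form u = 3} = ∅ :=
    Set.eq_empty_of_forall_notMem fun u (hu : 7 * form u = 3) => by omega
  simpa [hempty] using ncard_reps_seven_mul_add 3

lemma ncard_reps_three_mul_seven_pow (k : ℕ) : (reps (3 * 7 ^ k)).ncard = (k + 1) * 6 := by
  have h₀ : (reps 3).ncard = 6 := by
    simpa [posReps_three] using ncard_reps_eq_six_mul (not_isSquare_three_mul_seven_pow 0)
  rw [eq_succ_mul_of_add_eq_two_mul (t := fun k => (reps (3 * 7 ^ k)).ncard) _ _ k]
  · simp [h₀]
  · simpa [mul_comm] using ncard_reps_twenty_one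
  · intro k
    have h := ncard_reps_seven_mul_seven_mul_add (3 * 7 ^ k)
    rwa [show (7 : ℤ) * (7 * (3 * 7 ^ k)) = 3 * 7 ^ (k + 2) by ring,
      show (7 : ℤ) * (3 * 7 ^ k) = 3 * 7 ^ (k + 1) by ring] at h

lemma ncard_posReps_three_mul_seven_pow (k : ℕ) : (posReps (3 * 7 ^ k)).ncard = k + 1 := by
  have := ncard_reps_three_mul_seven_pow k
  rw [ncard_reps_eq_six_mul (not_isSquare_three_mul_seven_pow k)] at this
  omega

lemma two_dvd_of_two_dvd_form {z : ℤ × ℤ} (h : 2 ∣ form z) : 2 ∣ z.1 ∧ 2 ∣ z.2 := by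
  simp only [← even_iff_two_dvd, form, Int.even_add, Int.even_mul, Int.even_pow] at h ⊢
  tauto

lemma posReps_four_mul (m : ℤ) :
    posReps (4 * m) = (fun u : ℤ × ℤ => (2 : ℤ) • u) '' posReps m := by
  ext z
  constructor
  · obtain ⟨x, y⟩ := z
    rintro ⟨hx, hy, h⟩
    obtain ⟨⟨a, rfl⟩, ⟨b, rfl⟩⟩ := two_dvd_of_two_dvd_form (z := (x, y)) ⟨2 * m, by rw [h]; ring⟩
    simp only [form] at hx hy h
    exact ⟨(a, b), ⟨by omega, by omega, by simp only [form]; linarith⟩, rfl⟩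
  · rintro ⟨⟨a, b⟩, ⟨ha, hb, h⟩, rfl⟩
    simp only [Prod.smul_mk, smul_eq_mul] at ha hb h ⊢
    exact ⟨by omega, by omega, by simp only [form] at h ⊢; linear_combination 4 * h⟩

lemma ncard_posReps_four_pow_mul (j : ℕ) (m : ℤ) :
    (posReps (4 ^ j * m)).ncard = (posReps m).ncard := by
  induction j with
  | zero => simp
  | succ j ih =>
    rw [pow_succ', mul_assoc, posReps_four_mul,
      Set.ncard_image_of_injective _ (smul_right_injective _ two_ne_zero), ih]

lemma ncard_pos_nat_pairs_eq (n : ℕ) :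
    {z : ℕ × ℕ | 0 < z.1 ∧ 0 < z.2 ∧ z.1 ^ 2 + z.1 * z.2 + z.2 ^ 2 = n}.ncard =
      (posReps n).ncard := by
  have : posReps n = Prod.map (Nat.cast : ℕ → ℤ) Nat.cast ''
      {z : ℕ × ℕ | 0 < z.1 ∧ 0 < z.2 ∧ z.1 ^ 2 + z.1 * z.2 + z.2 ^ 2 = n} := by
    ext ⟨x, y⟩
    constructor
    · rintro ⟨hx, hy, h⟩
      lift x to ℕ using hx.le
      lift y to ℕ using hy.le
      simp only [form] at hx hy h
      exact ⟨(x, y), ⟨by exact_mod_cast hx, by exact_mod_cast hy, by exact_mod_cast h⟩, rfl⟩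
    · rintro ⟨⟨a, b⟩, ⟨ha, hb, h⟩, hab⟩
      simp only [Prod.map, Prod.mk.injEq] at hab
      obtain ⟨rfl, rfl⟩ := hab
      exact ⟨by simpa using ha, by simpa using hb, by simp only [form]; exact_mod_cast h⟩
  rw [this, Set.ncard_image_of_injective _ (Nat.cast_injective.prodMap Nat.cast_injective)]

end Loeschian

open Loeschian in
theorem stmt_3 (d : ℕ) (hd : 0 < d) :
    {n : ℕ | 0 < n ∧
      {z : ℕ × ℕ | 0 < z.1 ∧ 0 < z.2 ∧ z.1 ^ 2 + z.1 * z.2 + z.2 ^ 2 = n}.ncard = d}.Infinite := by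
  obtain ⟨k, rfl⟩ : ∃ k, d = k + 1 := ⟨d - 1, by omega⟩
  refine Set.infinite_of_injective_forall_mem (f := fun j : ℕ => 4 ^ j * (3 * 7 ^ k))
    (fun i j h => Nat.pow_right_injective (by norm_num : 2 ≤ 4)
      (Nat.eq_of_mul_eq_mul_right (by positivity : 0 < 3 * 7 ^ k) h)) fun j => ⟨by positivity, ?_⟩
  rw [ncard_pos_nat_pairs_eq]
  push_cast
  rw [ncard_posReps_four_pow_mul, ncard_posReps_three_mul_seven_pow]
end

section
/- Let k and l be positive integers. Then the function φ satisfies φ'''(x) + φ'(x) + i·λ·φ(x) = 0 for every x ∈ ℝ, and moreover φ(0) = φ(L) = 0 and φ'(0) = φ'(L) = 0. -/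
noncomputable section

/-- `n = k² + k·l + l²` as a real number. -/
def nR (k l : ℕ) : ℝ := ((k ^ 2 + k * l + l ^ 2 : ℕ) : ℝ)

/-- The critical length `L = 2π√(n/3)`. -/
def LL (k l : ℕ) : ℝ := 2 * Real.pi * Real.sqrt (nR k l / 3)

/-- `λ = (2k+l)(k−l)(2l+k)/(3√3 n^{3/2})`. -/
def lam (k l : ℕ) : ℝ :=
  ((2 * k + l : ℕ) : ℝ) * ((k : ℝ) - (l : ℝ)) * ((2 * l + k : ℕ) : ℝ) /
    (3 * Real.sqrt 3 * nR k l ^ ((3 : ℝ) / 2))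

/-- The Type 1 eigenfunction `φ`. -/
def phi (k l : ℕ) : ℝ → ℂ := fun x =>
  -Complex.exp (Complex.I *
      ((x * (Real.sqrt 3 * ((2 * k + l : ℕ) : ℝ)) / (3 * Real.sqrt (nR k l)) : ℝ) : ℂ))
  - ((k : ℂ) / (l : ℂ)) * Complex.exp (-(Complex.I *
      ((x * (Real.sqrt 3 * ((k + 2 * l : ℕ) : ℝ)) / (3 * Real.sqrt (nR k l)) : ℝ) : ℂ)))
  + (((k : ℂ) + (l : ℂ)) / (l : ℂ)) * Complex.exp (Complex.I *
      ((x * (Real.sqrt 3 * ((l : ℝ) - (k : ℝ))) / (3 * Real.sqrt (nR k l)) : ℝ) : ℂ))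

/-- The Type 2 eigenfunction `φ̃`. -/
def phiT (k l : ℕ) : ℝ → ℂ := fun x =>
  Complex.exp (Complex.I *
      ((x * (Real.sqrt 3 * ((2 * k + l : ℕ) : ℝ)) / (3 * Real.sqrt (nR k l)) : ℝ) : ℂ))
  - Complex.exp (-(Complex.I *
      ((x * (Real.sqrt 3 * ((k + 2 * l : ℕ) : ℝ)) / (3 * Real.sqrt (nR k l)) : ℝ) : ℂ)))

end

/-!
`φ` is a combination of the exponentials `exp (i μ x)` with `μ = u / √(3n)` for
`u ∈ {2k+l, -(k+2l), l-k}`. These `u` sum to `0` and their pairwise products sum to `-3n`, so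
they are the roots of `u³ - 3nu - (2k+l)(k-l)(2l+k)`; equivalently the `μ` are the roots of
`μ³ - μ = λ`, and every exponential solves `y''' + y' + iλy = 0`. The coefficients of `φ` sum to
`0` and are orthogonal to the frequencies, so `φ(0) = φ'(0) = 0`. Finally `μL = 2πu/3` and the
three `u` agree mod `3`, so all exponentials take one common value `E` at `L`, whence
`φ(L) = E φ(0)` and `φ'(L) = E φ'(0)`.
-/

open Complex Real

section ExpPoly

variable {ι : Type*} [Fintype ι] (c ω : ι → ℂ)

noncomputable def expPoly (x : ℝ) : ℂ := ∑ j, c j * cexp (ω j * x)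

theorem hasDerivAt_expPoly (x : ℝ) :
    HasDerivAt (expPoly c ω) (expPoly (c * ω) ω x) x := by
  unfold expPoly
  refine HasDerivAt.fun_sum fun j _ => ?_
  have h := (((hasDerivAt_id (x : ℂ)).const_mul (ω j)).cexp.comp_ofReal).const_mul (c j)
  simpa [mul_comm, mul_left_comm, mul_assoc] using h

theorem deriv_expPoly : deriv (expPoly c ω) = expPoly (c * ω) ω :=
  funext fun x => (hasDerivAt_expPoly c ω x).deriv

theorem expPoly_zero : expPoly c ω 0 = ∑ j, c j := by
  simp [expPoly]

theorem expPoly_eq_mul_expPoly_zero {L : ℝ} {E : ℂ} (h : ∀ j, cexp (ω j * L) = E) :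
    expPoly c ω L = E * expPoly c ω 0 := by
  simp [expPoly, h, Finset.mul_sum, mul_comm]

theorem expPoly_ode {a : ℂ} (h : ∀ j, ω j ^ 3 + ω j + a = 0) (x : ℝ) :
    deriv (deriv (deriv (expPoly c ω))) x + deriv (expPoly c ω) x + a * expPoly c ω x = 0 := by
  simp only [deriv_expPoly, expPoly, Pi.mul_apply, Finset.mul_sum, ← Finset.sum_add_distrib]
  refine Finset.sum_eq_zero fun j _ => ?_
  linear_combination c j * cexp (ω j * x) * h j

end ExpPoly

theorem I_mul_ofReal_cube_add {t μ : ℝ} (h : t ^ 3 - t = μ) :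
    (I * t) ^ 3 + I * t + I * μ = 0 := by
  have h' : (t : ℂ) ^ 3 - t = μ := mod_cast h
  linear_combination (-I) * h' + (t : ℂ) ^ 3 * I * I_sq

theorem cube_sub_self_of_sqrt_mul_div {u n m : ℝ} (hn : 0 < n) (hu : u ^ 3 - 3 * n * u = m) :
    (√3 * u / (3 * √n)) ^ 3 - √3 * u / (3 * √n) = m / (3 * √3 * n ^ ((3 : ℝ) / 2)) := by
  have h3 : √3 ^ 2 = 3 := Real.sq_sqrt (by norm_num)
  have hn' : √n ^ 2 = n := Real.sq_sqrt hn.le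
  have hsn : √n ≠ 0 := (Real.sqrt_pos.mpr hn).ne'
  rw [Real.rpow_div_two_eq_sqrt _ hn.le, Real.rpow_ofNat, ← hu]
  field_simp
  linear_combination (u ^ 3 * (√3 ^ 2 + 3) - 9 * u * √n ^ 2) * h3 - 27 * u * hn'

section Frequencies

variable (k l : ℕ)

theorem nR_pos (hl : 0 < l) : 0 < nR k l := by
  unfold nR; positivity

noncomputable def freq (u : ℝ) : ℝ := √3 * u / (3 * √(nR k l))

theorem cube_sub_three_nR_mul {u : ℝ} (hu : u = 2 * k + l ∨ u = -(k + 2 * l) ∨ u = l - k) :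
    u ^ 3 - 3 * nR k l * u = (2 * k + l) * (k - l) * (2 * l + k) := by
  unfold nR
  push_cast
  rcases hu with rfl | rfl | rfl <;> ring

theorem freq_cube_sub_freq (hl : 0 < l) {u : ℝ}
    (hu : u = 2 * k + l ∨ u = -(k + 2 * l) ∨ u = l - k) :
    freq k l u ^ 3 - freq k l u = lam k l := by
  unfold freq lam
  rw [cube_sub_self_of_sqrt_mul_div (nR_pos k l hl) (cube_sub_three_nR_mul k l hu)]
  push_cast
  ring

theorem freq_mul_LL (hl : 0 < l) (u : ℝ) : freq k l u * LL k l = 2 * π * u / 3 := by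
  have hn := nR_pos k l hl
  have hsn : √(nR k l) ≠ 0 := (Real.sqrt_pos.mpr hn).ne'
  unfold freq LL
  rw [Real.sqrt_div hn.le]
  field_simp

theorem cexp_I_mul_freq_mul_LL_eq (hl : 0 < l) {u v : ℝ} (m : ℤ) (huv : v = u + 3 * m) :
    cexp (I * freq k l v * LL k l) = cexp (I * freq k l u * LL k l) := by
  have h : I * freq k l v * LL k l = I * freq k l u * LL k l + m * (2 * π * I) := by
    simp only [mul_assoc, ← ofReal_mul, freq_mul_LL k l hl, huv]
    push_cast
    ring
  rw [h, Complex.exp_add, exp_int_mul_two_pi_mul_I, mul_one]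

theorem phi_eq_expPoly : phi k l = expPoly ![-1, -(k / l), (k + l) / l]
    ![I * freq k l (2 * k + l), I * freq k l (-(k + 2 * l)), I * freq k l (l - k)] := by
  funext x
  simp only [phi, expPoly, freq, Fin.sum_univ_three]
  push_cast
  ring_nf

end Frequencies

theorem stmt_4_general (k l : ℕ) (hl : 0 < l) :
    (∀ x : ℝ, deriv (deriv (deriv (phi k l))) x + deriv (phi k l) x
        + Complex.I * ((lam k l : ℝ) : ℂ) * phi k l x = 0) ∧
    phi k l 0 = 0 ∧ phi k l (LL k l) = 0 ∧
    deriv (phi k l) 0 = 0 ∧ deriv (phi k l) (LL k l) = 0 := by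
  rw [phi_eq_expPoly k l]
  set c : Fin 3 → ℂ := ![-1, -(k / l), (k + l) / l]
  set ω : Fin 3 → ℂ :=
    ![I * freq k l (2 * k + l), I * freq k l (-(k + 2 * l)), I * freq k l (l - k)]
  have hl' : (l : ℂ) ≠ 0 := Nat.cast_ne_zero.mpr hl.ne'
  have hroots (j : Fin 3) : ω j ^ 3 + ω j + I * lam k l = 0 := by
    fin_cases j <;> exact I_mul_ofReal_cube_add (freq_cube_sub_freq k l hl (by simp))
  have hL (j : Fin 3) : cexp (ω j * LL k l) = cexp (I * freq k l (l - k) * LL k l) := by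
    fin_cases j
    · exact cexp_I_mul_freq_mul_LL_eq k l hl k (by push_cast; ring)
    · exact cexp_I_mul_freq_mul_LL_eq k l hl (-l) (by push_cast; ring)
    · rfl
  have hc : ∑ j, c j = 0 := by
    simp only [c, Fin.sum_univ_three, Matrix.cons_val_zero, Matrix.cons_val_one, Matrix.cons_val]
    field_simp
    ring
  have hcω : ∑ j, (c * ω) j = 0 := by
    simp only [c, ω, freq, Pi.mul_apply, Fin.sum_univ_three, Matrix.cons_val_zero,
      Matrix.cons_val_one, Matrix.cons_val]
    push_cast
    field_simp
    ring
  refine ⟨expPoly_ode c ω hroots, ?_, ?_, ?_, ?_⟩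
  · rw [expPoly_zero, hc]
  · rw [expPoly_eq_mul_expPoly_zero c ω hL, expPoly_zero, hc, mul_zero]
  · rw [deriv_expPoly, expPoly_zero, hcω]
  · rw [deriv_expPoly, expPoly_eq_mul_expPoly_zero (c * ω) ω hL, expPoly_zero, hcω, mul_zero]

theorem stmt_4 (k l : ℕ) (hk : 0 < k) (hl : 0 < l) :
    (∀ x : ℝ, deriv (deriv (deriv (phi k l))) x + deriv (phi k l) x
        + Complex.I * ((lam k l : ℝ) : ℂ) * phi k l x = 0) ∧
    phi k l 0 = 0 ∧ phi k l (LL k l) = 0 ∧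
    deriv (phi k l) 0 = 0 ∧ deriv (phi k l) (LL k l) = 0 :=
  stmt_4_general k l hl
end
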